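/- arXiv:1001.3014 — 5 statements merged into one kernel-verified Lean document; each statement's English description precedes it below -/
import Mathlib

section
/- Let f_{a,b,c} be a piecewise linear Lorenz map with ac + b(1-c) = 1 and irrational rotation number ρ. Then the Lyapunov exponent of f_{a,b,c} is zero at every point x not in ∪_{n≥0} f^{-n}(c): lim_n (1/n) log (f^n)'(x) = 0. -/
/-!
Since `ac + b(1-c) = 1`, the map `L x = ℓ(fract x) + ⌊x⌋`, where `ℓ = f` on `[0,c)` and
`ℓ = f + 1` on `[c,1)`, is a monotone degree-one lift of `f`. Along an orbit avoiding `c` one has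
`Lⁿ x = fⁿ x + mₙ(x)`, so `|mₙ(x) - nτ| ≤ 2` for the translation number `τ` of `L`, and
`log (fⁿ)'(x) = nλ + O(1)` with `λ = (1-τ) log a + τ log b`. It remains to see that `λ = 0`.
The at most `n` points of `⋃_{i<n} f^{-i}(c)` in `[0,1)` miss some interval of length
`1/(2(n+1))`; on it `fⁿ` is affine with slope `(fⁿ)'`, and its image lies in `[0,1]`, so
`nλ ≤ log (2(n+1)) + O(1)`. The inverse of `f` is the Lorenz map with parameters
`(1/b, 1/a, 1-ac)`, whose lift has translation number `1 - τ`; the same bound for it gives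
`-nλ ≤ log (2(n+1)) + O(1)`.
-/

/-- The piecewise linear Lorenz map `f_{a,b,c}`. -/
noncomputable def lorenz (a b c : ℝ) : ℝ → ℝ := fun x =>
  if x < c then a * x + 1 - a * c else b * (x - c)

open Classical in
/-- `mcount f c n x` is the number of `0 ≤ i < n` with `f^i(x) ∈ (c,1]`. -/
noncomputable def mcount (f : ℝ → ℝ) (c : ℝ) (n : ℕ) (x : ℝ) : ℕ :=
  ((Finset.range n).filter fun i => f^[i] x ∈ Set.Ioc c 1).card

open Set Filter Real Topology

structure IsLorenzParams (a b c : ℝ) : Prop where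
  a_pos : 0 < a
  b_pos : 0 < b
  c_pos : 0 < c
  c_lt_one : c < 1
  balance : a * c + b * (1 - c) = 1

namespace IsLorenzParams

variable {a b c : ℝ}

theorem one_sub_mul_eq (hp : IsLorenzParams a b c) : 1 - a * c = b * (1 - c) := by
  linarith [hp.balance]

theorem one_sub_mul_pos (hp : IsLorenzParams a b c) : 0 < 1 - a * c := by
  rw [hp.one_sub_mul_eq]
  exact mul_pos hp.b_pos (sub_pos.2 hp.c_lt_one)

theorem inv (hp : IsLorenzParams a b c) : IsLorenzParams b⁻¹ a⁻¹ (1 - a * c) where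
  a_pos := inv_pos.2 hp.b_pos
  b_pos := inv_pos.2 hp.a_pos
  c_pos := hp.one_sub_mul_pos
  c_lt_one := sub_lt_self 1 (mul_pos hp.a_pos hp.c_pos)
  balance := by
    rw [sub_sub_cancel, hp.one_sub_mul_eq, inv_mul_cancel_left₀ hp.b_pos.ne',
      inv_mul_cancel_left₀ hp.a_pos.ne']
    ring

end IsLorenzParams

theorem mcount_succ (f : ℝ → ℝ) (c : ℝ) (n : ℕ) (x : ℝ) :
    mcount f c (n + 1) x = mcount f c n x + if f^[n] x ∈ Ioc c 1 then 1 else 0 := by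
  classical
  unfold mcount
  rw [Finset.range_add_one, Finset.filter_insert]
  split_ifs
  · exact Finset.card_insert_of_notMem (by simp)
  · rfl

theorem mcount_le (f : ℝ → ℝ) (c : ℝ) (n : ℕ) (x : ℝ) : mcount f c n x ≤ n :=
  (Finset.card_filter_le _ _).trans (Finset.card_range n).le

theorem CircleDeg1Lift.abs_iterate_sub_sub_translationNumber_lt (f : CircleDeg1Lift) (n : ℕ)
    (x : ℝ) : |f^[n] x - x - n * f.translationNumber| < 1 := by
  rw [← CircleDeg1Lift.coe_pow, ← CircleDeg1Lift.translationNumber_pow]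
  have hlo := (f ^ n).floor_sub_le_translationNumber x
  have hhi := (f ^ n).translationNumber_le_ceil_sub x
  rw [abs_lt]
  constructor <;>
    linarith [Int.lt_floor_add_one ((f ^ n) x - x), Int.ceil_lt_add_one ((f ^ n) x - x)]

theorem lt_of_forall_eq_add_mul_of_ne {g : ℝ → ℝ} {u v r c t : ℝ} (hr : 0 < r)
    (hg : ∀ s ∈ Icc u v, g s = g u + r * (s - u)) (hc : ∀ s ∈ Icc u v, g s ≠ c)
    (hu : g u < c) (ht : t ∈ Icc u v) : g t < c := by
  by_contra! hct
  set s := u + (c - g u) / r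
  have hrs : r * (s - u) = c - g u := by rw [add_sub_cancel_left, mul_div_cancel₀ _ hr.ne']
  have hs : s ∈ Icc u v := by
    have := hg t ht
    constructor <;> nlinarith [ht.2]
  exact hc s hs (by rw [hg s hs, hrs]; ring)

theorem exists_finset_card_le_of_injOn {α β : Type*} {s : Set α} (g : ℕ → α → β)
    (hg : ∀ i, InjOn (g i) s) (c : β) (n : ℕ) :
    ∃ T : Finset α, T.card ≤ n ∧ ∀ x ∈ s, ∀ i < n, g i x = c → x ∈ T := by
  classical
  have hsub : ∀ i, {x | x ∈ s ∧ g i x = c}.Subsingleton :=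
    fun i x hx y hy => hg i hx.1 hy.1 (hx.2.trans hy.2.symm)
  refine ⟨(Finset.range n).biUnion fun i => (hsub i).finite.toFinset, ?_, ?_⟩
  · simpa using Finset.card_biUnion_le_card_mul (Finset.range n) _ 1 fun i _ =>
      Finset.card_le_one.2 fun x hx y hy =>
        hsub i ((hsub i).finite.mem_toFinset.1 hx) ((hsub i).finite.mem_toFinset.1 hy)
  · intro x hx i hi hxi
    exact Finset.mem_biUnion.2
      ⟨i, Finset.mem_range.2 hi, (hsub i).finite.mem_toFinset.2 ⟨hx, hxi⟩⟩

/-- Pigeonhole: the `n + 1` disjoint intervals `[j/(n+1), (j + 1/2)/(n+1)]` cannot all meet a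
set of at most `n` points. -/
theorem exists_Icc_notMem_of_card_le (T : Finset ℝ) (n : ℕ) (hT : T.card ≤ n) :
    ∃ u : ℝ, 0 ≤ u ∧ u + 1 / (2 * (n + 1)) < 1 ∧
      ∀ t ∈ Icc u (u + 1 / (2 * (n + 1))), t ∉ T := by
  obtain ⟨j, hj, hjT⟩ :
      ∃ j ∈ Finset.range (n + 1), j ∉ T.image fun t : ℝ => ⌊t * (n + 1)⌋₊ :=
    Finset.exists_mem_notMem_of_card_lt_card <| Finset.card_image_le.trans_lt <| by simpa using hT
  have hjn : (j : ℝ) ≤ n := by exact_mod_cast Nat.lt_succ_iff.1 (Finset.mem_range.1 hj)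
  have hN : (0 : ℝ) < n + 1 := by positivity
  have hend : (j : ℝ) / (n + 1) + 1 / (2 * (n + 1)) = (j + 1 / 2) / (n + 1) := by
    field_simp
  refine ⟨(j : ℝ) / (n + 1), by positivity, ?_,
    fun t ht htT => hjT (Finset.mem_image.2 ⟨t, htT, ?_⟩)⟩
  · rw [hend, div_lt_one hN]
    linarith
  · have hlo : (j : ℝ) ≤ t * (n + 1) := (div_le_iff₀ hN).1 ht.1
    have hhi : t * (n + 1) ≤ j + 1 / 2 := (le_div_iff₀ hN).1 (hend ▸ ht.2)
    rw [Nat.floor_eq_iff ((Nat.cast_nonneg j).trans hlo)]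
    constructor <;> linarith

theorem log_pow_sub_mul_pow {a b : ℝ} (ha : 0 < a) (hb : 0 < b) {m n : ℕ} (hmn : m ≤ n)
    (τ : ℝ) : log (a ^ (n - m) * b ^ m) =
      n * ((1 - τ) * log a + τ * log b) + (n * τ - m) * (log a - log b) := by
  rw [log_mul (by positivity) (by positivity), log_pow, log_pow, Nat.cast_sub hmn]
  ring

theorem nonpos_of_forall_nat_mul_le_log {t K : ℝ}
    (h : ∀ n : ℕ, n * t ≤ log (2 * (n + 1)) + K) : t ≤ 0 := by
  have hlog : Tendsto (fun n : ℕ => log (2 * (n + 1)) / n) atTop (𝓝 0) := by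
    have h2 : Tendsto (fun n : ℕ => 2 * ((n : ℝ) + 1)) atTop atTop :=
      (tendsto_natCast_atTop_atTop.atTop_add tendsto_const_nhds).const_mul_atTop two_pos
    refine ((tendsto_pow_log_div_mul_add_atTop (1 / 2) (-1) 1 (by norm_num)).comp h2).congr
      fun n => ?_
    simp only [Function.comp_apply, pow_one]
    congr 1
    ring
  have hlim := hlog.add (tendsto_const_div_atTop_nhds_zero_nat K)
  rw [add_zero] at hlim
  refine ge_of_tendsto hlim (eventually_atTop.2 ⟨1, fun n hn => ?_⟩)
  rw [← add_div, le_div_iff₀ (by exact_mod_cast hn)]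
  linarith [h n]

section LorenzMap

variable {a b c : ℝ}

theorem lorenz_of_lt {x : ℝ} (hx : x < c) : lorenz a b c x = a * x + 1 - a * c := if_pos hx

theorem lorenz_of_le {x : ℝ} (hx : c ≤ x) : lorenz a b c x = b * (x - c) := if_neg hx.not_gt

theorem mapsTo_lorenz (hp : IsLorenzParams a b c) :
    MapsTo (lorenz a b c) (Icc 0 1) (Ico 0 1) := by
  rintro y ⟨hy0, hy1⟩
  have := hp.one_sub_mul_pos
  rcases lt_or_ge y c with hyc | hyc
  · rw [lorenz_of_lt hyc]
    have := hp.a_pos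
    constructor <;> nlinarith
  · rw [lorenz_of_le hyc]
    have := mul_le_mul_of_nonneg_left (sub_le_sub_right hy1 c) hp.b_pos.le
    constructor <;> nlinarith [hp.one_sub_mul_eq, hp.b_pos, mul_pos hp.a_pos hp.c_pos]

theorem mapsTo_lorenz_Icc (hp : IsLorenzParams a b c) :
    MapsTo (lorenz a b c) (Icc 0 1) (Icc 0 1) :=
  (mapsTo_lorenz hp).mono_right Ico_subset_Icc_self

theorem injOn_lorenz (hp : IsLorenzParams a b c) : InjOn (lorenz a b c) (Ico 0 1) := by
  have := hp.a_pos
  have := hp.b_pos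
  rintro x ⟨hx0, hx1⟩ y ⟨hy0, hy1⟩ hxy
  unfold lorenz at hxy
  split_ifs at hxy <;> nlinarith [hp.one_sub_mul_eq]

noncomputable def lorenzLiftFun (a b c y : ℝ) : ℝ :=
  if y < c then a * y + 1 - a * c else b * (y - c) + 1

theorem monotone_lorenzLiftFun (hp : IsLorenzParams a b c) :
    Monotone (lorenzLiftFun a b c) := by
  have := hp.a_pos
  have := hp.b_pos
  intro x y hxy
  unfold lorenzLiftFun
  split_ifs <;> nlinarith

theorem lorenzLiftFun_lt_add_one (hp : IsLorenzParams a b c) {y y' : ℝ} (hy : y < 1)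
    (hy' : 0 ≤ y') : lorenzLiftFun a b c y < lorenzLiftFun a b c y' + 1 := by
  have := hp.a_pos
  have := hp.b_pos
  have := hp.c_lt_one
  have := mul_pos hp.a_pos hp.c_pos
  unfold lorenzLiftFun
  split_ifs <;> nlinarith [hp.one_sub_mul_eq]

noncomputable def lorenzLift (hp : IsLorenzParams a b c) : CircleDeg1Lift where
  toFun x := lorenzLiftFun a b c (Int.fract x) + ⌊x⌋
  monotone' x y hxy := by
    rcases (Int.floor_mono hxy).eq_or_lt with hfl | hfl
    · have : Int.fract x ≤ Int.fract y := by
        simpa only [Int.fract, hfl, sub_le_sub_iff_right] using hxy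
      simpa only [hfl, add_le_add_iff_right] using monotone_lorenzLiftFun hp this
    · have : (⌊x⌋ : ℝ) + 1 ≤ ⌊y⌋ := by exact_mod_cast hfl
      linarith [lorenzLiftFun_lt_add_one hp (Int.fract_lt_one x) (Int.fract_nonneg y)]
  map_add_one' x := by
    simp only [Int.fract_add_one, Int.floor_add_one, Int.cast_add, Int.cast_one]
    ring

theorem lorenzLift_apply (hp : IsLorenzParams a b c) (x : ℝ) :
    lorenzLift hp x = lorenzLiftFun a b c (Int.fract x) + ⌊x⌋ := rfl

theorem lorenzLift_of_mem_Ico (hp : IsLorenzParams a b c) {y : ℝ} (hy : y ∈ Ico 0 1) :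
    lorenzLift hp y = lorenzLiftFun a b c y := by
  rw [lorenzLift_apply, Int.fract_eq_self.2 hy, Int.floor_eq_zero_iff.2 hy, Int.cast_zero,
    add_zero]

theorem lorenzLift_of_mem_Icc (hp : IsLorenzParams a b c) {y : ℝ} (hy : y ∈ Icc 0 1)
    (hyc : y ≠ c) : lorenzLift hp y = lorenz a b c y + if y ∈ Ioc c 1 then 1 else 0 := by
  rcases hy.2.lt_or_eq with hy1 | rfl
  · rw [lorenzLift_of_mem_Ico hp ⟨hy.1, hy1⟩, lorenzLiftFun]
    rcases hyc.lt_or_gt with hlt | hgt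
    · rw [if_pos hlt, lorenz_of_lt hlt, if_neg fun h => h.1.not_gt hlt, add_zero]
    · rw [if_neg hgt.not_gt, lorenz_of_le hgt.le, if_pos ⟨hgt, hy1.le⟩]
  · have h1 : lorenzLift hp 1 = lorenzLift hp 0 + 1 := by
      simpa using (lorenzLift hp).map_add_one 0
    rw [h1, lorenzLift_of_mem_Ico hp ⟨le_rfl, zero_lt_one⟩, lorenzLiftFun, if_pos hp.c_pos,
      lorenz_of_le hp.c_lt_one.le, if_pos ⟨hp.c_lt_one, le_rfl⟩, ← hp.one_sub_mul_eq]
    ring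

theorem iterate_lorenzLift (hp : IsLorenzParams a b c) {x : ℝ} (hx : x ∈ Icc 0 1) (n : ℕ)
    (hav : ∀ i < n, (lorenz a b c)^[i] x ≠ c) :
    (lorenzLift hp)^[n] x = (lorenz a b c)^[n] x + mcount (lorenz a b c) c n x := by
  induction n with
  | zero => simp [mcount]
  | succ n ih =>
    rw [Function.iterate_succ_apply', ih fun i hi => hav i (by omega),
      CircleDeg1Lift.map_add_nat,
      lorenzLift_of_mem_Icc hp ((mapsTo_lorenz_Icc hp).iterate n hx) (hav n n.lt_succ_self),
      mcount_succ, Function.iterate_succ_apply']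
    push_cast
    ring

theorem abs_mcount_sub_translationNumber_le (hp : IsLorenzParams a b c) {x : ℝ}
    (hx : x ∈ Icc 0 1) (n : ℕ) (hav : ∀ i < n, (lorenz a b c)^[i] x ≠ c) :
    |(mcount (lorenz a b c) c n x : ℝ) - n * (lorenzLift hp).translationNumber| ≤ 2 := by
  have hlift := (lorenzLift hp).abs_iterate_sub_sub_translationNumber_lt n x
  have hmem := (mapsTo_lorenz_Icc hp).iterate n hx
  rw [iterate_lorenzLift hp hx n hav, abs_lt] at hlift
  rw [abs_le]
  constructor <;> linarith [hx.1, hx.2, hmem.1, hmem.2]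

/-- The hypotheses make `lorenz a' b' c'` the inverse of `lorenz a b c` on the circle. -/
theorem lorenzLift_lorenzLift_of_dual {a' b' c' : ℝ} (hp : IsLorenzParams a b c)
    (hq : IsLorenzParams a' b' c') (hab : a * b' = 1) (hba : b * a' = 1)
    (hc : c' = 1 - a * c) (x : ℝ) : lorenzLift hq (lorenzLift hp x) = x + 1 := by
  have hunit : ∀ y ∈ Ico (0 : ℝ) 1, lorenzLift hq (lorenzLiftFun a b c y) = y + 1 := by
    rintro y ⟨hy0, hy1⟩
    subst hc
    have := hp.one_sub_mul_pos
    have := hp.a_pos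
    have := hp.b_pos
    have hbal := hp.one_sub_mul_eq
    rcases lt_or_ge y c with hyc | hyc
    · have hmem : a * y + 1 - a * c ∈ Ico (0 : ℝ) 1 := by
        constructor <;> nlinarith
      rw [lorenzLiftFun, if_pos hyc, lorenzLift_of_mem_Ico hq hmem, lorenzLiftFun,
        if_neg (by nlinarith)]
      linear_combination y * hab
    · have hmem : b * (y - c) ∈ Ico (0 : ℝ) 1 := by
        constructor <;> nlinarith [mul_pos hp.a_pos hp.c_pos]
      rw [lorenzLiftFun, if_neg hyc.not_gt, CircleDeg1Lift.map_add_one,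
        lorenzLift_of_mem_Ico hq hmem, lorenzLiftFun, if_pos (by nlinarith)]
      linear_combination (y - 1) * hba - a' * hbal
  rw [lorenzLift_apply hp x, CircleDeg1Lift.map_add_int,
    hunit _ ⟨Int.fract_nonneg x, Int.fract_lt_one x⟩, add_right_comm, Int.fract_add_floor]

theorem translationNumber_add_of_dual {a' b' c' : ℝ} (hp : IsLorenzParams a b c)
    (hq : IsLorenzParams a' b' c') (hab : a * b' = 1) (hba : b * a' = 1)
    (hc : c' = 1 - a * c) :
    (lorenzLift hq).translationNumber + (lorenzLift hp).translationNumber = 1 := by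
  have hc' : c = 1 - a' * c' := by
    rw [hc, hp.one_sub_mul_eq]
    linear_combination (1 - c) * hba
  have hqp := lorenzLift_lorenzLift_of_dual hp hq hab hba hc
  have hpq := lorenzLift_lorenzLift_of_dual hq hp (by linear_combination hba)
    (by linear_combination hab) hc'
  have hcomm : Commute (lorenzLift hq) (lorenzLift hp) :=
    CircleDeg1Lift.ext fun x => (hqp x).trans (hpq x).symm
  rw [← CircleDeg1Lift.translationNumber_mul_of_commute hcomm,
    CircleDeg1Lift.translationNumber_of_eq_add_int (x := 0) (m := 1)]
  · simp
  · simpa using hqp 0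

theorem iterate_lorenz_eq_add_mul (hp : IsLorenzParams a b c) {u v : ℝ} (hu : 0 ≤ u)
    (hv : v ≤ 1) (n : ℕ) (hav : ∀ t ∈ Icc u v, ∀ i < n, (lorenz a b c)^[i] t ≠ c) :
    ∀ t ∈ Icc u v, (lorenz a b c)^[n] t = (lorenz a b c)^[n] u +
      a ^ (n - mcount (lorenz a b c) c n u) * b ^ mcount (lorenz a b c) c n u * (t - u) := by
  induction n with
  | zero => simp [mcount]
  | succ n ih =>
    intro t ht
    have hu' : u ∈ Icc u v := ⟨le_rfl, ht.1.trans ht.2⟩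
    have ih := ih fun s hs i hi => hav s hs i (by omega)
    set m := mcount (lorenz a b c) c n u
    have hmn : m ≤ n := mcount_le _ c n u
    have hr : 0 < a ^ (n - m) * b ^ m := by have := hp.a_pos; have := hp.b_pos; positivity
    have hne : ∀ s ∈ Icc u v, (lorenz a b c)^[n] s ≠ c :=
      fun s hs => hav s hs n n.lt_succ_self
    simp only [Function.iterate_succ_apply']
    rcases (hne u hu').lt_or_gt with hlt | hgt
    · have htc := lt_of_forall_eq_add_mul_of_ne hr ih hne hlt ht
      have hm : mcount (lorenz a b c) c (n + 1) u = m := by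
        rw [mcount_succ, if_neg fun h => h.1.not_gt hlt, add_zero]
      rw [lorenz_of_lt htc, lorenz_of_lt hlt, hm, ih t ht, Nat.sub_add_comm hmn, pow_succ]
      ring
    · have htc : c < (lorenz a b c)^[n] t := by
        rw [ih t ht]
        nlinarith [ht.1]
      have hm : mcount (lorenz a b c) c (n + 1) u = m + 1 := by
        rw [mcount_succ,
          if_pos ⟨hgt, ((mapsTo_lorenz_Icc hp).iterate n ⟨hu, hu'.2.trans hv⟩).2⟩]
      rw [lorenz_of_le htc.le, lorenz_of_le hgt.le, hm, ih t ht, Nat.add_sub_add_right, pow_succ]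
      ring

theorem exists_Icc_forall_iterate_lorenz_ne (hp : IsLorenzParams a b c) (n : ℕ) :
    ∃ u : ℝ, 0 ≤ u ∧ u + 1 / (2 * (n + 1)) < 1 ∧
      ∀ t ∈ Icc u (u + 1 / (2 * (n + 1))), ∀ i < n, (lorenz a b c)^[i] t ≠ c := by
  obtain ⟨T, hTn, hT⟩ := exists_finset_card_le_of_injOn (fun i => (lorenz a b c)^[i])
    ((injOn_lorenz hp).iterate ((mapsTo_lorenz hp).mono_left Ico_subset_Icc_self)) c n
  obtain ⟨u, hu, hu1, hfree⟩ := exists_Icc_notMem_of_card_le T n hTn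
  exact ⟨u, hu, hu1, fun t ht i hi hti =>
    hfree t ht (hT t ⟨hu.trans ht.1, ht.2.trans_lt hu1⟩ i hi hti)⟩

theorem abs_translationNumber_sub_mcount_mul_le (hp : IsLorenzParams a b c) {x : ℝ}
    (hx : x ∈ Icc 0 1) (n : ℕ) (hav : ∀ i < n, (lorenz a b c)^[i] x ≠ c) :
    |(n * (lorenzLift hp).translationNumber - mcount (lorenz a b c) c n x) * (log a - log b)|
      ≤ 2 * |log a - log b| := by
  rw [abs_mul, abs_sub_comm]
  gcongr
  exact abs_mcount_sub_translationNumber_le hp hx n hav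

/-- `fⁿ` is affine with slope `(fⁿ)'(u)` on an interval of length `1/(2(n+1))` and maps it
into `[0,1]`, so `(fⁿ)'(u) ≤ 2(n+1)`. -/
theorem nat_mul_lyapunov_le (hp : IsLorenzParams a b c) (n : ℕ) :
    n * ((1 - (lorenzLift hp).translationNumber) * log a +
        (lorenzLift hp).translationNumber * log b) ≤
      log (2 * (n + 1)) + 2 * |log a - log b| := by
  obtain ⟨u, hu, hu1, hav⟩ := exists_Icc_forall_iterate_lorenz_ne hp n
  set δ : ℝ := 1 / (2 * (n + 1))
  set m := mcount (lorenz a b c) c n u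
  have hδ : 0 < δ := by positivity
  have hu' : u ∈ Icc u (u + δ) := ⟨le_rfl, by linarith⟩
  have hv : u + δ ∈ Icc u (u + δ) := ⟨by linarith, le_rfl⟩
  have hmem : ∀ t ∈ Icc u (u + δ), (lorenz a b c)^[n] t ∈ Icc 0 1 := fun t ht =>
    (mapsTo_lorenz_Icc hp).iterate n ⟨hu.trans ht.1, ht.2.trans hu1.le⟩
  have hr : 0 < a ^ (n - m) * b ^ m := by have := hp.a_pos; have := hp.b_pos; positivity
  have hslope : a ^ (n - m) * b ^ m * δ ≤ 1 := by
    have := iterate_lorenz_eq_add_mul hp hu hu1.le n hav (u + δ) hv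
    linarith [(hmem u hu').1, (hmem _ hv).2]
  have hlog : log (a ^ (n - m) * b ^ m) ≤ log (2 * (n + 1)) := by
    refine log_le_log hr ?_
    rwa [mul_one_div, div_le_one (by positivity)] at hslope
  rw [log_pow_sub_mul_pow hp.a_pos hp.b_pos (mcount_le _ c n u)
    (lorenzLift hp).translationNumber] at hlog
  linarith [neg_abs_le ((n * (lorenzLift hp).translationNumber - m) * (log a - log b)),
    abs_translationNumber_sub_mcount_mul_le hp ⟨hu, hu1.le.trans' (by linarith)⟩ n
      fun i hi => hav u hu' i hi]

/-- The paper's `a^(1-ρ) b^ρ = 1`, with `ρ` the translation number of the lift. -/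
theorem lyapunov_eq_zero (hp : IsLorenzParams a b c) :
    (1 - (lorenzLift hp).translationNumber) * log a +
      (lorenzLift hp).translationNumber * log b = 0 := by
  have hτ : (lorenzLift hp.inv).translationNumber = 1 - (lorenzLift hp).translationNumber :=
    eq_sub_of_add_eq (translationNumber_add_of_dual hp hp.inv (mul_inv_cancel₀ hp.a_pos.ne')
      (mul_inv_cancel₀ hp.b_pos.ne') rfl)
  have hinv := nat_mul_lyapunov_le hp.inv
  simp only [hτ, log_inv, sub_sub_cancel, neg_sub_neg] at hinv
  refine abs_nonpos_iff.1
    (nonpos_of_forall_nat_mul_le_log (K := 2 * |log a - log b|) fun n => ?_)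
  rcases abs_choice ((1 - (lorenzLift hp).translationNumber) * log a +
      (lorenzLift hp).translationNumber * log b) with h | h <;> rw [h]
  · exact nat_mul_lyapunov_le hp n
  · convert hinv n using 2
    ring

theorem abs_log_slope_iterate_le (hp : IsLorenzParams a b c) {x : ℝ}
    (hx : x ∈ Icc 0 1) (n : ℕ) (hav : ∀ i < n, (lorenz a b c)^[i] x ≠ c) :
    |log (a ^ (n - mcount (lorenz a b c) c n x) * b ^ mcount (lorenz a b c) c n x)| ≤
      2 * |log a - log b| := by
  rw [log_pow_sub_mul_pow hp.a_pos hp.b_pos (mcount_le _ c n x)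
    (lorenzLift hp).translationNumber, lyapunov_eq_zero hp, mul_zero, zero_add]
  exact abs_translationNumber_sub_mcount_mul_le hp hx n hav

end LorenzMap

theorem lyapunov_exponent_zero_general (a b c : ℝ)
    (ha : 0 < a) (hb : 0 < b) (hc : c ∈ Set.Ioo (0:ℝ) 1)
    (heq : a * c + b * (1 - c) = 1) :
    ∀ x ∈ Set.Icc (0:ℝ) 1, x ∉ (⋃ n : ℕ, (lorenz a b c)^[n] ⁻¹' {c}) →
      Filter.Tendsto
        (fun n : ℕ => (1 / (n : ℝ)) *
          Real.log (a ^ (n - mcount (lorenz a b c) c n x) *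
            b ^ (mcount (lorenz a b c) c n x)))
        Filter.atTop (nhds 0) := by
  intro x hx hC
  have hp : IsLorenzParams a b c := ⟨ha, hb, hc.1, hc.2, heq⟩
  have hav : ∀ i, (lorenz a b c)^[i] x ≠ c := fun i hi => hC (mem_iUnion.2 ⟨i, hi⟩)
  refine squeeze_zero_norm (fun n => ?_)
    (tendsto_const_div_atTop_nhds_zero_nat (2 * |log a - log b|))
  rw [norm_mul, norm_eq_abs, norm_eq_abs, abs_of_nonneg (by positivity), one_div_mul_eq_div]
  exact div_le_div_of_nonneg_right (abs_log_slope_iterate_le hp hx n fun i _ => hav i)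
    n.cast_nonneg

/-- For `f_{a,b,c}` with `ac + b(1-c) = 1` and irrational rotation
number `ρ`, the Lyapunov exponent is zero at every point `x ∉ ∪_n f^{-n}(c)`:
`(1/n) log (fⁿ)'(x) → 0`, where `(fⁿ)'(x) = a^(n - m_n(x)) * b^(m_n(x))`. -/
theorem lyapunov_exponent_zero (a b c ρ : ℝ) (F : ℝ → ℝ)
    (ha : 0 < a) (hb : 0 < b) (hc : c ∈ Set.Ioo (0:ℝ) 1)
    (heq : a * c + b * (1 - c) = 1)
    (hdeg : ∀ x : ℝ, F (x + 1) = F x + 1)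
    (hlift : ∀ x : ℝ, Complex.exp (2 * Real.pi * Complex.I * (F x))
      = Complex.exp (2 * Real.pi * Complex.I * (lorenz a b c (Int.fract x))))
    (hF0 : F 0 = lorenz a b c 0)
    (hρ : ∀ x ∈ Set.Icc (0:ℝ) 1,
      Filter.Tendsto (fun n : ℕ => (F^[n] x - x) / n) Filter.atTop (nhds ρ))
    (hirr : Irrational ρ) :
    ∀ x ∈ Set.Icc (0:ℝ) 1, x ∉ (⋃ n : ℕ, (lorenz a b c)^[n] ⁻¹' {c}) →
      Filter.Tendsto
        (fun n : ℕ => (1 / (n : ℝ)) *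
          Real.log (a ^ (n - mcount (lorenz a b c) c n x) *
            b ^ (mcount (lorenz a b c) c n x)))
        Filter.atTop (nhds 0) :=
  lyapunov_exponent_zero_general a b c ha hb hc heq
end

section
/- Let f_{a,b,c} be a piecewise linear Lorenz map with ac + b(1-c) = 1 and log a / log b irrational. Then there exists a constant r > 0 (explicitly r = min{(a/b)^4, (b/a)^4}) such that for all n ≥ 1 and all Borel sets A ⊆ [0,1], r·m(A) ≤ m(f^{-n}(A)) ≤ m(A)/r, where m is Lebesgue measure. -/
/-!
On `[0, 1)` the map `f = lorenz a b c` is a bijection whose inverse `g` is affine with slope `1/b`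
on `[0, d)` and `1/a` on `[d, 1)`, where `d = b (1 - c)`. Hence `[0, 1) ∩ f⁻ⁿ A = gⁿ (A ∩ [0, 1))`,
and `gⁿ` carries Lebesgue measure on `[0, 1)` to the density `b^(-k) a^(-(n - k))`, where `k`
counts the visits of `y, g y, …, gⁿ⁻¹ y` to `[0, d)`. Lifting `g` to a monotone degree-one map `G`
of `ℝ`, the visits are counted by the integer part, `⌊Gⁿ y⌋ = -k`; as `Gⁿ` is monotone and
commutes with `x ↦ x + 1`, `k` varies by at most one on `[0, 1)`. So the density varies by at most
the factor `K = max (a/b) (b/a)`, and since it integrates to `1` it lies in `[K⁻¹, K]`.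
-/

open MeasureTheory

open Set
open scoped ENNReal Pointwise

theorem Set.LeftInvOn.iterate {α : Type*} {f g : α → α} {s : Set α} (h : LeftInvOn f g s)
    (hg : MapsTo g s s) (n : ℕ) : LeftInvOn f^[n] g^[n] s := by
  induction n with
  | zero => exact fun _ _ => rfl
  | succ n ih =>
    rw [Function.iterate_succ, Function.iterate_succ']
    exact ih.comp h (hg.iterate n)

theorem floor_iterate_le_floor_iterate_add_one {G : ℝ → ℝ} (hG : Monotone G)
    (hG1 : ∀ x, G (x + 1) = G x + 1) (n : ℕ) {x y : ℝ} (hyx : y ≤ x + 1) :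
    ⌊G^[n] y⌋ ≤ ⌊G^[n] x⌋ + 1 := by
  have hcomm : G^[n] (x + 1) = G^[n] x + 1 :=
    (Function.Commute.iterate_left (g := (· + 1)) hG1 n) x
  calc ⌊G^[n] y⌋ ≤ ⌊G^[n] (x + 1)⌋ := Int.floor_mono (hG.iterate n hyx)
    _ = ⌊G^[n] x⌋ + 1 := by rw [hcomm, Int.floor_add_one]

theorem monotone_floor_add_comp_fract {h : ℝ → ℝ} (hmono : MonotoneOn h (Ico 0 1))
    (hosc : ∀ t ∈ Ico (0 : ℝ) 1, ∀ s ∈ Ico (0 : ℝ) 1, h t ≤ h s + 1) :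
    Monotone fun x : ℝ => (⌊x⌋ : ℝ) + h (Int.fract x) := by
  intro x y hxy
  have hx : Int.fract x ∈ Ico (0 : ℝ) 1 := ⟨Int.fract_nonneg x, Int.fract_lt_one x⟩
  have hy : Int.fract y ∈ Ico (0 : ℝ) 1 := ⟨Int.fract_nonneg y, Int.fract_lt_one y⟩
  rcases (Int.floor_mono hxy).eq_or_lt with hfl | hfl
  · have hfract : Int.fract x ≤ Int.fract y := by
      rw [Int.fract, Int.fract, hfl]; linarith
    simp only [hfl, add_le_add_iff_left]
    exact hmono hx hy hfract
  · have : (⌊x⌋ : ℝ) + 1 ≤ ⌊y⌋ := by exact_mod_cast hfl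
    linarith [hosc _ hx _ hy]

theorem volume_image_mul_add (p t : ℝ) (T : Set ℝ) :
    volume ((fun y => p * y + t) '' T) = ENNReal.ofReal |p| * volume T := by
  have : (fun y => p * y + t) '' T = (· + t) '' (p • T) := by
    rw [← image_smul, image_image]; rfl
  rw [this, image_add_right, measure_preimage_add_right, Measure.addHaar_smul]
  simp

theorem pow_le_max_inv_mul_pow {x : ℝ} (hx : 0 < x) {k l : ℕ} (hkl : k ≤ l + 1)
    (hlk : l ≤ k + 1) : x ^ k ≤ max x x⁻¹ * x ^ l := by
  rcases (by omega : k = l + 1 ∨ k = l ∨ l = k + 1) with rfl | rfl | rfl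
  · rw [pow_succ']
    exact mul_le_mul_of_nonneg_right (le_max_left _ _) (by positivity)
  · refine le_mul_of_one_le_left (by positivity) (le_max_iff.mpr ?_)
    exact (le_total 1 x).imp id (one_le_inv₀ hx).mpr
  · have : 1 ≤ max x x⁻¹ * x := by
      rw [← inv_mul_cancel₀ hx.ne']
      exact mul_le_mul_of_nonneg_right (le_max_right _ _) hx.le
    rw [pow_succ', ← mul_assoc]
    exact le_mul_of_one_le_left (by positivity) this

theorem min_pow_le_inv_max {x : ℝ} (hx : 0 < x) {n : ℕ} (hn : n ≠ 0) :
    min (x ^ n) (x⁻¹ ^ n) ≤ (max x x⁻¹)⁻¹ := by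
  rcases le_total x 1 with h | h
  · rw [max_eq_right (h.trans ((one_le_inv₀ hx).mpr h)), inv_inv]
    exact (min_le_left _ _).trans (pow_le_of_le_one hx.le h hn)
  · rw [max_eq_left (inv_le_one_of_one_le₀ h |>.trans h)]
    exact (min_le_right _ _).trans
      (pow_le_of_le_one (by positivity) (inv_le_one_of_one_le₀ h) hn)

theorem inv_le_and_le_of_setLIntegral_eq_one {α : Type*} [MeasurableSpace α]
    {μ : Measure α} {s : Set α} (hs : MeasurableSet s) (hμs : μ s = 1) {D : α → ℝ}
    (hD : ∫⁻ x in s, ENNReal.ofReal (D x) ∂μ = 1) {K : ℝ} (hK : 0 < K)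
    (hDK : ∀ x ∈ s, ∀ y ∈ s, D x ≤ K * D y) {x : α} (hx : x ∈ s) :
    K⁻¹ ≤ D x ∧ D x ≤ K := by
  have one_le {C : ℝ} (hC : ∀ y ∈ s, D y ≤ C) : 1 ≤ C := by
    refine ENNReal.one_le_ofReal.mp ?_
    calc 1 = ∫⁻ y in s, ENNReal.ofReal (D y) ∂μ := hD.symm
      _ ≤ ∫⁻ _ in s, ENNReal.ofReal C ∂μ :=
        setLIntegral_mono' hs fun y hy => ENNReal.ofReal_le_ofReal (hC y hy)
      _ = ENNReal.ofReal C := by rw [setLIntegral_const, hμs, mul_one]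
  have le_one {C : ℝ} (hC : ∀ y ∈ s, C ≤ D y) : C ≤ 1 := by
    refine ENNReal.ofReal_le_one.mp ?_
    calc ENNReal.ofReal C = ∫⁻ _ in s, ENNReal.ofReal C ∂μ := by
          rw [setLIntegral_const, hμs, mul_one]
      _ ≤ ∫⁻ y in s, ENNReal.ofReal (D y) ∂μ :=
        setLIntegral_mono' hs fun y hy => ENNReal.ofReal_le_ofReal (hC y hy)
      _ = 1 := hD
  constructor
  · rw [inv_le_iff_one_le_mul₀' hK]
    exact one_le fun y hy => hDK y hy x hx
  · rw [← div_le_one hK]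
    exact le_one fun y hy => by rw [div_le_iff₀' hK]; exact hDK x hx y hy

theorem ofReal_mul_le_setLIntegral_and_le_div {α : Type*} [MeasurableSpace α]
    {μ : Measure α} {A : Set α} (hA : MeasurableSet A) {D : α → ℝ} {r : ℝ} (hr : 0 < r)
    (hD : ∀ y ∈ A, r ≤ D y ∧ D y ≤ r⁻¹) :
    ENNReal.ofReal r * μ A ≤ ∫⁻ y in A, ENNReal.ofReal (D y) ∂μ ∧
      ∫⁻ y in A, ENNReal.ofReal (D y) ∂μ ≤ μ A / ENNReal.ofReal r := by
  constructor
  · rw [← setLIntegral_const]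
    exact setLIntegral_mono' hA fun y hy => ENNReal.ofReal_le_ofReal (hD y hy).1
  · calc ∫⁻ y in A, ENNReal.ofReal (D y) ∂μ ≤ ∫⁻ _ in A, ENNReal.ofReal r⁻¹ ∂μ :=
          setLIntegral_mono' hA fun y hy => ENNReal.ofReal_le_ofReal (hD y hy).2
      _ = μ A / ENNReal.ofReal r := by
        rw [setLIntegral_const, ENNReal.ofReal_inv_of_pos hr, div_eq_mul_inv, mul_comm]

namespace Lorenz

/-- The common value `f 0 = f 1`; the inverse branch of `f` on `[0, 1)` switches there. -/
noncomputable def endValue (b c : ℝ) : ℝ := b * (1 - c)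

noncomputable def inverse (a b c : ℝ) (y : ℝ) : ℝ :=
  if y < endValue b c then y / b + c else (y - endValue b c) / a

noncomputable def visits (a b c : ℝ) (n : ℕ) (y : ℝ) : ℕ :=
  ∑ i ∈ Finset.range n, if (inverse a b c)^[i] y < endValue b c then 1 else 0

/-- The product of the slopes of `inverse` along `y, inverse y, …, inverse^[n - 1] y`. -/
noncomputable def density (a b c : ℝ) (n : ℕ) (y : ℝ) : ℝ :=
  a⁻¹ ^ n * (a / b) ^ visits a b c n y

/-- A lift of `inverse` to a degree-one map of `ℝ` whose integer part drops by one at each visit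
to `[0, endValue b c)`. -/
noncomputable def lift (a b c : ℝ) (x : ℝ) : ℝ :=
  ⌊x⌋ + (inverse a b c (Int.fract x) - if Int.fract x < endValue b c then 1 else 0)

variable {a b c : ℝ}

theorem endValue_eq (heq : a * c + b * (1 - c) = 1) : endValue b c = 1 - a * c := by
  rw [endValue]; linarith

theorem inverse_of_lt {y : ℝ} (hy : y < endValue b c) : inverse a b c y = b⁻¹ * y + c := by
  rw [inverse, if_pos hy, div_eq_inv_mul]

theorem inverse_of_le {y : ℝ} (hy : endValue b c ≤ y) :
    inverse a b c y = a⁻¹ * y + -(a⁻¹ * endValue b c) := by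
  rw [inverse, if_neg hy.not_gt]; ring

theorem mapsTo_inverse_Ico_endValue (hb : 0 < b) :
    MapsTo (inverse a b c) (Ico 0 (endValue b c)) (Ico c 1) := by
  intro y ⟨hy0, hyd⟩
  rw [inverse_of_lt hyd]
  have : b⁻¹ * y < 1 - c := by
    rw [inv_mul_lt_iff₀ hb]; exact hyd
  constructor <;> nlinarith [inv_pos.mpr hb]

theorem mapsTo_inverse_endValue_Ico (ha : 0 < a) (heq : a * c + b * (1 - c) = 1) :
    MapsTo (inverse a b c) (Ico (endValue b c) 1) (Ico 0 c) := by
  intro y ⟨hdy, hy1⟩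
  rw [inverse_of_le hdy, ← sub_eq_add_neg, ← mul_sub, endValue_eq heq]
  constructor
  · exact mul_nonneg (inv_nonneg.mpr ha.le) (by linarith [endValue_eq heq])
  · rw [inv_mul_lt_iff₀ ha]; linarith

theorem mapsTo_inverse (ha : 0 < a) (hb : 0 < b) (hc : c ∈ Ioo 0 1)
    (heq : a * c + b * (1 - c) = 1) : MapsTo (inverse a b c) (Ico 0 1) (Ico 0 1) := by
  intro y ⟨hy0, hy1⟩
  rcases lt_or_ge y (endValue b c) with hyd | hdy
  · exact Ico_subset_Ico_left hc.1.le (mapsTo_inverse_Ico_endValue hb ⟨hy0, hyd⟩)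
  · exact Ico_subset_Ico_right hc.2.le (mapsTo_inverse_endValue_Ico ha heq ⟨hdy, hy1⟩)

theorem mapsTo_lorenz (ha : 0 < a) (hb : 0 < b) (hc : c ∈ Ioo 0 1)
    (heq : a * c + b * (1 - c) = 1) : MapsTo (lorenz a b c) (Ico 0 1) (Ico 0 1) := by
  intro x ⟨hx0, hx1⟩
  unfold lorenz
  have hd : 0 < b * (1 - c) := mul_pos hb (sub_pos.mpr hc.2)
  have hac : 0 < a * c := mul_pos ha hc.1
  split_ifs with hxc
  · have := mul_nonneg ha.le hx0
    have := mul_lt_mul_of_pos_left hxc ha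
    constructor <;> linarith
  · have := mul_nonneg hb.le (sub_nonneg.mpr (not_lt.mp hxc))
    have := mul_lt_mul_of_pos_left (sub_lt_sub_right hx1 c) hb
    constructor <;> linarith

theorem leftInvOn_lorenz_inverse (ha : 0 < a) (hb : 0 < b) (heq : a * c + b * (1 - c) = 1) :
    LeftInvOn (lorenz a b c) (inverse a b c) (Ico 0 1) := by
  intro y ⟨hy0, hy1⟩
  rcases lt_or_ge y (endValue b c) with hyd | hdy
  · have : ¬ b⁻¹ * y + c < c := by
      have := mul_nonneg (inv_nonneg.mpr hb.le) hy0; linarith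
    rw [inverse_of_lt hyd, lorenz, if_neg this]
    field_simp; ring
  · have : a⁻¹ * y + -(a⁻¹ * endValue b c) < c := by
      rw [← sub_eq_add_neg, ← mul_sub, inv_mul_lt_iff₀ ha, endValue_eq heq]; linarith
    rw [inverse_of_le hdy, lorenz, if_pos this, endValue_eq heq]
    field_simp; ring

theorem leftInvOn_inverse_lorenz (ha : 0 < a) (hb : 0 < b) (heq : a * c + b * (1 - c) = 1) :
    LeftInvOn (inverse a b c) (lorenz a b c) (Ico 0 1) := by
  intro x ⟨hx0, hx1⟩
  rw [lorenz]
  split_ifs with hxc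
  · rw [inverse_of_le (by rw [endValue_eq heq]; nlinarith)]
    field_simp
    rw [endValue_eq heq]; ring
  · rw [inverse_of_lt (by rw [endValue]; nlinarith)]
    field_simp; ring

theorem bijOn_inverse (ha : 0 < a) (hb : 0 < b) (hc : c ∈ Ioo 0 1)
    (heq : a * c + b * (1 - c) = 1) : BijOn (inverse a b c) (Ico 0 1) (Ico 0 1) :=
  InvOn.bijOn ⟨leftInvOn_lorenz_inverse ha hb heq, leftInvOn_inverse_lorenz ha hb heq⟩
    (mapsTo_inverse ha hb hc heq) (mapsTo_lorenz ha hb hc heq)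

theorem Ico_inter_preimage_iterate_lorenz (ha : 0 < a) (hb : 0 < b) (hc : c ∈ Ioo 0 1)
    (heq : a * c + b * (1 - c) = 1) (n : ℕ) (B : Set ℝ) :
    Ico 0 1 ∩ (lorenz a b c)^[n] ⁻¹' B = (inverse a b c)^[n] '' (B ∩ Ico 0 1) := by
  rw [((leftInvOn_lorenz_inverse ha hb heq).iterate (mapsTo_inverse ha hb hc heq) n).image_inter',
    ((bijOn_inverse ha hb hc heq).iterate n).image_eq, inter_comm]

theorem measurable_inverse : Measurable (inverse a b c) :=
  Measurable.ite measurableSet_Iio (by fun_prop) (by fun_prop)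

theorem measurableSet_image_iterate_inverse (ha : 0 < a) (hb : 0 < b) (hc : c ∈ Ioo 0 1)
    (heq : a * c + b * (1 - c) = 1) (n : ℕ) {S : Set ℝ} (hS : MeasurableSet S)
    (hS1 : S ⊆ Ico 0 1) : MeasurableSet ((inverse a b c)^[n] '' S) :=
  hS.image_of_measurable_injOn (measurable_inverse.iterate n)
    (((bijOn_inverse ha hb hc heq).iterate n).injOn.mono hS1)

theorem volume_image_inverse (ha : 0 < a) (hb : 0 < b) (hc : c ∈ Ioo 0 1)
    (heq : a * c + b * (1 - c) = 1) {T : Set ℝ} (hT : MeasurableSet T) (hT1 : T ⊆ Ico 0 1) :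
    volume (inverse a b c '' T) = ENNReal.ofReal b⁻¹ * volume (T ∩ Iio (endValue b c))
      + ENNReal.ofReal a⁻¹ * volume (T \ Iio (endValue b c)) := by
  set d := endValue b c
  have hleft : T ∩ Iio d ⊆ Ico 0 d := fun y hy => ⟨(hT1 hy.1).1, hy.2⟩
  have hright : T \ Iio d ⊆ Ico d 1 := fun y hy => ⟨not_lt.mp hy.2, (hT1 hy.1).2⟩
  have hdisj : Disjoint (inverse a b c '' (T ∩ Iio d)) (inverse a b c '' (T \ Iio d)) :=
    (Ico_disjoint_Ico_same.symm).mono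
      ((mapsTo_inverse_Ico_endValue hb).mono_left hleft).image_subset
      ((mapsTo_inverse_endValue_Ico ha heq).mono_left hright).image_subset
  have hmeas : MeasurableSet (inverse a b c '' (T \ Iio d)) :=
    (hT.diff measurableSet_Iio).image_of_measurable_injOn measurable_inverse
      ((bijOn_inverse ha hb hc heq).injOn.mono (sdiff_subset.trans hT1))
  rw [← inter_union_sdiff T (Iio d), image_union, measure_union hdisj hmeas, inter_union_sdiff,
    EqOn.image_eq fun y hy => inverse_of_lt hy.2,
    EqOn.image_eq fun y hy => inverse_of_le (not_lt.mp hy.2),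
    volume_image_mul_add, volume_image_mul_add, abs_of_pos (inv_pos.mpr hb),
    abs_of_pos (inv_pos.mpr ha)]

theorem visits_succ (n : ℕ) (y : ℝ) :
    visits a b c (n + 1) y =
      visits a b c n y + if (inverse a b c)^[n] y < endValue b c then 1 else 0 :=
  Finset.sum_range_succ _ n

theorem density_succ (ha : 0 < a) (n : ℕ) (y : ℝ) :
    density a b c (n + 1) y =
      density a b c n y * if (inverse a b c)^[n] y < endValue b c then b⁻¹ else a⁻¹ := by
  rw [density, density, visits_succ]
  split_ifs
  · rw [pow_succ, pow_succ]; field_simp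
  · rw [add_zero, pow_succ]; ring

theorem volume_image_iterate_inverse (ha : 0 < a) (hb : 0 < b) (hc : c ∈ Ioo 0 1)
    (heq : a * c + b * (1 - c) = 1) (n : ℕ) {S : Set ℝ} (hS : MeasurableSet S)
    (hS1 : S ⊆ Ico 0 1) :
    volume ((inverse a b c)^[n] '' S) = ∫⁻ y in S, ENNReal.ofReal (density a b c n y) := by
  induction n generalizing S with
  | zero => simp [density, visits]
  | succ n ih =>
    set U := (inverse a b c)^[n] ⁻¹' Iio (endValue b c)
    have hU : MeasurableSet U := (measurable_inverse.iterate n) measurableSet_Iio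
    have hscale {s : Set ℝ} (hs : MeasurableSet s) (w : ℝ) (hw : 0 ≤ w)
        (hsw : ∀ y ∈ s, density a b c (n + 1) y = density a b c n y * w) :
        ENNReal.ofReal w * ∫⁻ y in s, ENNReal.ofReal (density a b c n y) =
          ∫⁻ y in s, ENNReal.ofReal (density a b c (n + 1) y) := by
      rw [← lintegral_const_mul' _ _ ENNReal.ofReal_ne_top]
      refine setLIntegral_congr_fun hs fun y hy => ?_
      rw [hsw y hy, ENNReal.ofReal_mul' hw, mul_comm]
    -- on `S ∩ U` the last step applies the branch of slope `b⁻¹`, on `S \ U` that of slope `a⁻¹`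
    rw [Function.iterate_succ', image_comp,
      volume_image_inverse ha hb hc heq (measurableSet_image_iterate_inverse ha hb hc heq n hS hS1)
        (((mapsTo_inverse ha hb hc heq).iterate n).mono_left hS1).image_subset,
      ← image_inter_preimage, ← image_sdiff_preimage,
      ih (hS.inter hU) (inter_subset_left.trans hS1), ih (hS.diff hU) (sdiff_subset.trans hS1),
      ← lintegral_inter_add_sdiff _ S hU,
      hscale (hS.inter hU) _ (inv_nonneg.mpr hb.le) fun y hy => by
        rw [density_succ ha]; exact congrArg _ (if_pos hy.2),
      hscale (hS.diff hU) _ (inv_nonneg.mpr ha.le) fun y hy => by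
        rw [density_succ ha]; exact congrArg _ (if_neg hy.2)]

theorem setLIntegral_density_Ico (ha : 0 < a) (hb : 0 < b) (hc : c ∈ Ioo 0 1)
    (heq : a * c + b * (1 - c) = 1) (n : ℕ) :
    ∫⁻ y in Ico 0 1, ENNReal.ofReal (density a b c n y) = 1 := by
  rw [← volume_image_iterate_inverse ha hb hc heq n measurableSet_Ico subset_rfl,
    ((bijOn_inverse ha hb hc heq).iterate n).image_eq, Real.volume_Ico, sub_zero,
    ENNReal.ofReal_one]

theorem lift_add_one (x : ℝ) : lift a b c (x + 1) = lift a b c x + 1 := by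
  rw [lift, lift, Int.fract_add_one, Int.floor_add_one]; push_cast; ring

theorem floor_and_fract_lift (ha : 0 < a) (hb : 0 < b) (hc : c ∈ Ioo 0 1)
    (heq : a * c + b * (1 - c) = 1) (x : ℝ) :
    ⌊lift a b c x⌋ = ⌊x⌋ - (if Int.fract x < endValue b c then 1 else 0) ∧
      Int.fract (lift a b c x) = inverse a b c (Int.fract x) := by
  have h := mapsTo_inverse ha hb hc heq ⟨Int.fract_nonneg x, Int.fract_lt_one x⟩
  have hlift : lift a b c x =
      ((⌊x⌋ - if Int.fract x < endValue b c then 1 else 0 : ℤ) : ℝ) +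
        inverse a b c (Int.fract x) := by
    rw [lift]; split_ifs <;> push_cast <;> ring
  rw [hlift, Int.floor_intCast_add, Int.fract_intCast_add, Int.floor_eq_zero_iff.mpr h,
    Int.fract_eq_self.mpr h, add_zero]
  exact ⟨rfl, rfl⟩

theorem monotone_lift (ha : 0 < a) (hb : 0 < b) (hc : c ∈ Ioo 0 1)
    (heq : a * c + b * (1 - c) = 1) : Monotone (lift a b c) := by
  set d := endValue b c
  have hleft := mapsTo_inverse_Ico_endValue (a := a) (c := c) hb
  have hright := mapsTo_inverse_endValue_Ico (b := b) ha heq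
  refine monotone_floor_add_comp_fract
    (h := fun t => inverse a b c t - if t < d then 1 else 0) ?_ ?_
  · intro t ⟨ht0, ht1⟩ s ⟨hs0, hs1⟩ hts
    dsimp only
    by_cases htd : t < d <;> by_cases hsd : s < d
    · rw [if_pos htd, if_pos hsd, inverse_of_lt htd, inverse_of_lt hsd]
      linarith [mul_le_mul_of_nonneg_left hts (inv_nonneg.mpr hb.le)]
    · rw [if_pos htd, if_neg hsd]
      linarith [(hleft ⟨ht0, htd⟩).2, (hright ⟨not_lt.mp hsd, hs1⟩).1]
    · exact absurd (hts.trans_lt hsd) htd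
    · rw [if_neg htd, if_neg hsd, inverse_of_le (not_lt.mp htd),
        inverse_of_le (not_lt.mp hsd)]
      linarith [mul_le_mul_of_nonneg_left hts (inv_nonneg.mpr ha.le)]
  · have hrange : ∀ t ∈ Ico (0 : ℝ) 1,
        c - 1 ≤ inverse a b c t - (if t < d then 1 else 0) ∧
          inverse a b c t - (if t < d then 1 else 0) < c := by
      intro t ⟨ht0, ht1⟩
      by_cases htd : t < d
      · have := hleft ⟨ht0, htd⟩
        rw [if_pos htd]; constructor <;> linarith [this.1, this.2, hc.1]
      · have := hright ⟨not_lt.mp htd, ht1⟩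
        rw [if_neg htd]; constructor <;> linarith [this.1, this.2, hc.2]
    intro t ht s hs
    linarith [(hrange t ht).2, (hrange s hs).1]

theorem floor_and_fract_iterate_lift (ha : 0 < a) (hb : 0 < b) (hc : c ∈ Ioo 0 1)
    (heq : a * c + b * (1 - c) = 1) {y : ℝ} (hy : y ∈ Ico 0 1) (n : ℕ) :
    ⌊(lift a b c)^[n] y⌋ = -(visits a b c n y : ℤ) ∧
      Int.fract ((lift a b c)^[n] y) = (inverse a b c)^[n] y := by
  induction n with
  | zero => simp [visits, Int.floor_eq_zero_iff.mpr hy, Int.fract_eq_self.mpr hy]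
  | succ n ih =>
    obtain ⟨hfloor, hfract⟩ := floor_and_fract_lift ha hb hc heq ((lift a b c)^[n] y)
    rw [ih.1, ih.2] at hfloor
    rw [ih.2] at hfract
    rw [Function.iterate_succ_apply', Function.iterate_succ_apply', hfloor, hfract, visits_succ]
    refine ⟨?_, rfl⟩
    split_ifs <;> push_cast <;> ring

theorem visits_le_visits_add_one (ha : 0 < a) (hb : 0 < b) (hc : c ∈ Ioo 0 1)
    (heq : a * c + b * (1 - c) = 1) {y y' : ℝ} (hy : y ∈ Ico 0 1) (hy' : y' ∈ Ico 0 1)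
    (n : ℕ) : visits a b c n y ≤ visits a b c n y' + 1 := by
  have h := floor_iterate_le_floor_iterate_add_one (monotone_lift ha hb hc heq) lift_add_one n
    (show y' ≤ y + 1 by linarith [hy.1, hy'.2])
  rw [(floor_and_fract_iterate_lift ha hb hc heq hy n).1,
    (floor_and_fract_iterate_lift ha hb hc heq hy' n).1] at h
  omega

theorem density_le_max_mul_density (ha : 0 < a) (hb : 0 < b) (hc : c ∈ Ioo 0 1)
    (heq : a * c + b * (1 - c) = 1) {y y' : ℝ} (hy : y ∈ Ico 0 1) (hy' : y' ∈ Ico 0 1)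
    (n : ℕ) : density a b c n y ≤ max (a / b) (b / a) * density a b c n y' := by
  rw [density, density, ← inv_div a b]
  calc a⁻¹ ^ n * (a / b) ^ visits a b c n y
      ≤ a⁻¹ ^ n * (max (a / b) (a / b)⁻¹ * (a / b) ^ visits a b c n y') :=
        mul_le_mul_of_nonneg_left
          (pow_le_max_inv_mul_pow (div_pos ha hb)
            (visits_le_visits_add_one ha hb hc heq hy hy' n)
            (visits_le_visits_add_one ha hb hc heq hy' hy n))
          (pow_nonneg (inv_nonneg.mpr ha.le) n)
    _ = _ := by ring

theorem density_mem_Icc (ha : 0 < a) (hb : 0 < b) (hc : c ∈ Ioo 0 1)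
    (heq : a * c + b * (1 - c) = 1) {y : ℝ} (hy : y ∈ Ico 0 1) (n : ℕ) :
    (max (a / b) (b / a))⁻¹ ≤ density a b c n y ∧ density a b c n y ≤ max (a / b) (b / a) :=
  inv_le_and_le_of_setLIntegral_eq_one measurableSet_Ico (by simp)
    (setLIntegral_density_Ico ha hb hc heq n) (lt_max_of_lt_left (div_pos ha hb))
    (fun _ hx _ hy' => density_le_max_mul_density ha hb hc heq hx hy' n) hy

end Lorenz

theorem preimage_measure_comparable_general (a b c : ℝ)
    (ha : 0 < a) (hb : 0 < b) (hc : c ∈ Set.Ioo (0:ℝ) 1)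
    (heq : a * c + b * (1 - c) = 1) :
    ∃ r : ℝ, 0 < r ∧ r = min ((a / b) ^ 4) ((b / a) ^ 4) ∧
      ∀ n : ℕ, 1 ≤ n → ∀ A : Set ℝ, A ⊆ Set.Icc 0 1 → MeasurableSet A →
        ENNReal.ofReal r * volume A
            ≤ volume (Set.Icc (0:ℝ) 1 ∩ (lorenz a b c)^[n] ⁻¹' A) ∧
          volume (Set.Icc (0:ℝ) 1 ∩ (lorenz a b c)^[n] ⁻¹' A)
            ≤ volume A / ENNReal.ofReal r := by
  have hr : min ((a / b) ^ 4) ((b / a) ^ 4) ≤ (max (a / b) (b / a))⁻¹ := by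
    simpa only [inv_div] using min_pow_le_inv_max (div_pos ha hb) (n := 4) (by norm_num)
  have hr0 : 0 < min ((a / b) ^ 4) ((b / a) ^ 4) := by positivity
  refine ⟨_, hr0, rfl, fun n _ A hA hAm => ?_⟩
  have hAm' : MeasurableSet (A ∩ Ico 0 1) := hAm.inter measurableSet_Ico
  have hpre : volume (Icc 0 1 ∩ (lorenz a b c)^[n] ⁻¹' A) =
      ∫⁻ y in A ∩ Ico 0 1, ENNReal.ofReal (Lorenz.density a b c n y) := by
    rw [← measure_congr (Ico_ae_eq_Icc.inter (ae_eq_refl ((lorenz a b c)^[n] ⁻¹' A))),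
      Lorenz.Ico_inter_preimage_iterate_lorenz ha hb hc heq,
      Lorenz.volume_image_iterate_inverse ha hb hc heq n hAm' inter_subset_right]
  have hA' : volume (A ∩ Ico 0 1) = volume A := by
    rw [measure_congr ((ae_eq_refl A).inter Ico_ae_eq_Icc), inter_eq_left.mpr hA]
  rw [hpre, ← hA']
  refine ofReal_mul_le_setLIntegral_and_le_div hAm' hr0 fun y hy => ?_
  obtain ⟨hlow, hup⟩ := Lorenz.density_mem_Icc ha hb hc heq hy.2 n
  exact ⟨hr.trans hlow, hup.trans ((le_inv_comm₀ hr0 (by positivity)).mp hr)⟩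

/-- If `ac + b(1-c) = 1` and `log a / log b` is irrational, then with
`r = min ((a/b)^4) ((b/a)^4) > 0`, for all `n ≥ 1` and all Borel `A ⊆ [0,1]`,
`r·m(A) ≤ m(f^{-n}(A)) ≤ m(A)/r`. -/
theorem preimage_measure_comparable (a b c : ℝ)
    (ha : 0 < a) (hb : 0 < b) (hc : c ∈ Set.Ioo (0:ℝ) 1)
    (heq : a * c + b * (1 - c) = 1)
    (hirr : Irrational (Real.log a / Real.log b)) :
    ∃ r : ℝ, 0 < r ∧ r = min ((a / b) ^ 4) ((b / a) ^ 4) ∧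
      ∀ n : ℕ, 1 ≤ n → ∀ A : Set ℝ, A ⊆ Set.Icc 0 1 → MeasurableSet A →
        ENNReal.ofReal r * volume A
            ≤ volume (Set.Icc (0:ℝ) 1 ∩ (lorenz a b c)^[n] ⁻¹' A) ∧
          volume (Set.Icc (0:ℝ) 1 ∩ (lorenz a b c)^[n] ⁻¹' A)
            ≤ volume A / ENNReal.ofReal r :=
  preimage_measure_comparable_general a b c ha hb hc heq
end

section
/- Let f_{a,b,c} be a piecewise linear Lorenz map with ac + b(1-c) > 1, κ = 2, A = f(0) = 1 - ac, B = f(1) = b(1-c), and M = min{(c-A)/(B-c), (B-c)/(c-A)}. Then [A,B] ⊆ [P_L, P_R] with P_L = (abc+bc-b)/(ab-1), P_R = (abc+ac-1)/(ab-1) if and only if ab ≤ 1 + M and ab ≤ 1 + 1/M, i.e. ab ≤ 1 + M (since M ≤ 1). -/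
/-!
The endpoints are `P_L = c - (B - c) / (ab - 1)` and `P_R = c + (c - A) / (ab - 1)`, so `P_L ≤ A`
and `B ≤ P_R` are exactly the bounds `ab - 1 ≤ (B - c) / (c - A)` and `ab - 1 ≤ (c - A) / (B - c)`,
whose conjunction is `ab - 1 ≤ M`.
-/

section Endpoints

variable {K : Type*} [Field K]

theorem left_endpoint_eq_sub_div {a b c : K} (hab : a * b ≠ 1) :
    (a * b * c + b * c - b) / (a * b - 1) = c - (b * (1 - c) - c) / (a * b - 1) := by
  have : a * b - 1 ≠ 0 := sub_ne_zero.2 hab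
  field_simp
  ring

theorem right_endpoint_eq_add_div {a b c : K} (hab : a * b ≠ 1) :
    (a * b * c + a * c - 1) / (a * b - 1) = c + (c - (1 - a * c)) / (a * b - 1) := by
  have : a * b - 1 ≠ 0 := sub_ne_zero.2 hab
  field_simp
  ring

end Endpoints

section Bounds

variable {K : Type*} [Field K] [LinearOrder K] [IsStrictOrderedRing K] {c d u x : K}

theorem sub_div_le_iff_le_div_sub (hd : 0 < d) (hx : x < c) :
    c - u / d ≤ x ↔ d ≤ u / (c - x) := by
  rw [sub_le_comm, le_div_comm₀ (sub_pos.2 hx) hd]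

theorem le_add_div_iff_le_div_sub (hd : 0 < d) (hx : c < x) :
    x ≤ c + u / d ↔ d ≤ u / (x - c) := by
  rw [← sub_le_iff_le_add', le_div_comm₀ (sub_pos.2 hx) hd]

end Bounds

theorem renormalization_interval_containment_iff_general (a b c A B M PL PR : ℝ)
    (hA : A = 1 - a * c) (hB : B = b * (1 - c))
    (hAc : A < c) (hcB : c < B) (hab : 1 < a * b)
    (hM : M = min ((c - A) / (B - c)) ((B - c) / (c - A)))
    (hPL : PL = (a * b * c + b * c - b) / (a * b - 1))
    (hPR : PR = (a * b * c + a * c - 1) / (a * b - 1)) :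
    Set.Icc A B ⊆ Set.Icc PL PR ↔ a * b ≤ 1 + M := by
  have hd : 0 < a * b - 1 := sub_pos.2 hab
  have hPL' : PL = c - (B - c) / (a * b - 1) := by
    rw [hPL, hB, left_endpoint_eq_sub_div hab.ne']
  have hPR' : PR = c + (c - A) / (a * b - 1) := by
    rw [hPR, hA, right_endpoint_eq_add_div hab.ne']
  rw [Set.Icc_subset_Icc_iff (hAc.trans hcB).le, hPL', hPR',
    sub_div_le_iff_le_div_sub hd hAc, le_add_div_iff_le_div_sub hd hcB, hM, ← sub_le_iff_le_add',
    le_min_iff]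
  exact and_comm

/-- With `κ = 2`, `A = f(0) = 1 - ac`, `B = f(1) = b(1-c)`,
`A < c < B`, `ab > 1`, `M = min ((c-A)/(B-c), (B-c)/(c-A))`, one has
`[A,B] ⊆ [P_L,P_R]` if and only if `ab ≤ 1 + M`. -/
theorem renormalization_interval_containment_iff (a b c A B M PL PR : ℝ)
    (ha : 0 < a) (hb : 0 < b) (hc : c ∈ Set.Ioo (0:ℝ) 1)
    (hgt : 1 < a * c + b * (1 - c))
    (hA : A = 1 - a * c) (hB : B = b * (1 - c))
    (hAc : A < c) (hcB : c < B) (hab : 1 < a * b)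
    (hM : M = min ((c - A) / (B - c)) ((B - c) / (c - A)))
    (hPL : PL = (a * b * c + b * c - b) / (a * b - 1))
    (hPR : PR = (a * b * c + a * c - 1) / (a * b - 1)) :
    Set.Icc A B ⊆ Set.Icc PL PR ↔ a * b ≤ 1 + M :=
  renormalization_interval_containment_iff_general a b c A B M PL PR hA hB hAc hcB hab hM hPL hPR
end

section
/- Let β > 1 and α = 1/(β^{k-1}(β-1)) for some integer k ≥ 1, and let S(x) = βx for x ∈ [0, 1/β) and S(x) = α(x - 1/β) for x ∈ (1/β, 1]. Then the function g(x) = (1/(β-1)) 1_{[0,1]}(x) + Σ_{i=1}^k β^{i-1} 1_{[0, β^{-i}]}(x) satisfies P g = g, where P is the Perron–Frobenius (transfer) operator of S with respect to Lebesgue measure; equivalently, the measure with density g (normalized) is S-invariant. -/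
/-!
The Perron–Frobenius operator `P` of `S` is dual to composition with `S`: substituting
`y = βx` on the first branch and `y = α(x - 1/β)` on the second turns `∫_{S⁻¹A ∩ [0,1]} h`
into `∫_A P h`. So it suffices that `P g = g` almost everywhere on `[0,1]`. Since
`g(y/β) = 1/(β-1) + Σ_{i<k} βⁱ 1_{[0,β⁻ⁱ]}(y)`, the first branch of `P g` shifts the staircase
of `g` by one step, while the second branch only sees the flat part of `g` on `(1/β, 1]` and,
because `α(1 - 1/β) = β⁻ᵏ` and `1/α = β^(k-1)(β-1)`, it supplies exactly the missing top step.
-/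

open MeasureTheory Set

section AffineChange

variable {a : ℝ} (b : ℝ)

theorem Real.map_volume_mul_sub (ha : a ≠ 0) :
    Measure.map (fun x => a * (x - b)) volume = ENNReal.ofReal |a⁻¹| • volume := by
  have hcomp : (fun x : ℝ => a * (x - b)) = (a * ·) ∘ (· - b) := rfl
  rw [hcomp, ← Measure.map_map (measurable_const_mul a) (measurable_sub_const b),
    map_sub_right_eq_self, Real.map_volume_mul_left ha]

theorem measurableEmbedding_mul_sub (ha : a ≠ 0) :
    MeasurableEmbedding fun x : ℝ => a * (x - b) :=
  (measurableEmbedding_mulLeft₀ ha).comp (measurableEmbedding_subRight b)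

theorem setIntegral_preimage_mul_sub (ha : 0 < a) (h : ℝ → ℝ) (T : Set ℝ) :
    ∫ x in (fun x => a * (x - b)) ⁻¹' T, h x = a⁻¹ * ∫ y in T, h (y / a + b) := by
  have := (measurableEmbedding_mul_sub b ha.ne').setIntegral_map (μ := volume)
    (fun y => h (y / a + b)) T
  simp only [mul_div_cancel_left₀ _ ha.ne', sub_add_cancel] at this
  rw [← this, Real.map_volume_mul_sub b ha.ne', Measure.restrict_smul, integral_smul_measure,
    ENNReal.toReal_ofReal (abs_nonneg _), abs_of_pos (inv_pos.2 ha), smul_eq_mul]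

theorem integrableOn_comp_div_add_iff (ha : a ≠ 0) (h : ℝ → ℝ) (T : Set ℝ) :
    IntegrableOn (fun y => h (y / a + b)) T ↔ IntegrableOn h ((fun x => a * (x - b)) ⁻¹' T) := by
  have hc : ENNReal.ofReal |a⁻¹| ≠ 0 := by simp [ha]
  rw [IntegrableOn, ← integrable_smul_measure hc ENNReal.ofReal_ne_top, ← Measure.restrict_smul,
    ← Real.map_volume_mul_sub b ha, ← IntegrableOn,
    (measurableEmbedding_mul_sub b ha).integrableOn_map_iff, Function.comp_def]
  simp only [mul_div_cancel_left₀ _ ha, sub_add_cancel]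

end AffineChange

noncomputable def branchMap (β α : ℝ) (x : ℝ) : ℝ :=
  if x < 1 / β then β * x else α * (x - 1 / β)

/-- The Perron–Frobenius operator `P` of `branchMap β α` with respect to Lebesgue measure. -/
noncomputable def transfer (β α : ℝ) (h : ℝ → ℝ) (y : ℝ) : ℝ :=
  β⁻¹ * (Icc 0 1).indicator (fun y => h (y / β)) y +
    α⁻¹ * (Icc 0 (α * (1 - 1 / β))).indicator (fun y => h (y / α + 1 / β)) y

section BranchMap

variable {β α : ℝ}

/-- The first branch is written as `β * (x - 0)` so that both branches are instances of the
affine change of variables above. -/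
theorem preimage_branchMap_inter_Icc (hβ : 1 ≤ β) (hα : 0 < α) (A : Set ℝ) :
    branchMap β α ⁻¹' A ∩ Icc 0 1 =
      (fun x => β * (x - 0)) ⁻¹' (A ∩ Ico 0 1) ∪
        (fun x => α * (x - 1 / β)) ⁻¹' (A ∩ Icc 0 (α * (1 - 1 / β))) := by
  have hβ0 : 0 < β := by linarith
  ext x
  have hβ1 : 1 / β ≤ 1 := (div_le_one hβ0).2 hβ
  simp only [branchMap, mem_inter_iff, mem_preimage, mem_union, mem_Icc, mem_Ico, sub_zero]
  rw [mul_nonneg_iff_of_pos_left hβ0, mul_nonneg_iff_of_pos_left hα, mul_le_mul_iff_right₀ hα,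
    sub_nonneg, sub_le_sub_iff_right, ← lt_div_iff₀' hβ0]
  split_ifs with hx
  · constructor
    · rintro ⟨hA, h0, -⟩
      exact Or.inl ⟨hA, h0, hx⟩
    · rintro (⟨hA, h0, -⟩ | ⟨-, h, -⟩)
      · exact ⟨hA, h0, by linarith⟩
      · linarith
  · constructor
    · rintro ⟨hA, -, h1⟩
      exact Or.inr ⟨hA, not_lt.1 hx, h1⟩
    · rintro (⟨-, -, h⟩ | ⟨hA, h, h1⟩)
      · exact absurd h hx
      · exact ⟨hA, by linarith [one_div_pos.2 hβ0], h1⟩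

theorem disjoint_preimage_branches (hβ : 0 < β) (hα : 0 < α) (A : Set ℝ) :
    Disjoint ((fun x => β * (x - 0)) ⁻¹' (A ∩ Ico 0 1))
      ((fun x => α * (x - 1 / β)) ⁻¹' (A ∩ Icc 0 (α * (1 - 1 / β)))) := by
  refine disjoint_left.2 fun x hx₁ hx₂ => ?_
  have h₁ : β * x < 1 := by simpa using hx₁.2.2
  rw [← lt_div_iff₀' hβ] at h₁
  have h₂ : 1 / β ≤ x := by simpa [mul_nonneg_iff_of_pos_left hα] using hx₂.2.1
  exact h₂.not_gt h₁

theorem setIntegral_transfer {h : ℝ → ℝ} {A : Set ℝ}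
    (h₁ : IntegrableOn (fun y => h (y / β)) (A ∩ Icc 0 1))
    (h₂ : IntegrableOn (fun y => h (y / α + 1 / β)) (A ∩ Icc 0 (α * (1 - 1 / β)))) :
    ∫ y in A, transfer β α h y =
      (β⁻¹ * ∫ y in A ∩ Icc 0 1, h (y / β)) +
        α⁻¹ * ∫ y in A ∩ Icc 0 (α * (1 - 1 / β)), h (y / α + 1 / β) := by
  have hind₁ : IntegrableOn (fun y => β⁻¹ * (Icc 0 1).indicator (fun y => h (y / β)) y) A := by
    refine Integrable.const_mul ?_ _
    exact (integrableOn_indicator_iff measurableSet_Icc).2 (by rwa [inter_comm])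
  have hind₂ : IntegrableOn (fun y => α⁻¹ *
      (Icc 0 (α * (1 - 1 / β))).indicator (fun y => h (y / α + 1 / β)) y) A := by
    refine Integrable.const_mul ?_ _
    exact (integrableOn_indicator_iff measurableSet_Icc).2 (by rwa [inter_comm])
  unfold transfer
  rw [integral_add hind₁ hind₂, integral_const_mul, integral_const_mul,
    setIntegral_indicator measurableSet_Icc, setIntegral_indicator measurableSet_Icc]

theorem setIntegral_preimage_branchMap_inter_Icc (hβ : 1 ≤ β) (hα : 0 < α) {h : ℝ → ℝ}
    (hh : IntegrableOn h (Icc 0 1)) {A : Set ℝ} (hA : MeasurableSet A) :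
    ∫ x in branchMap β α ⁻¹' A ∩ Icc 0 1, h x = ∫ y in A, transfer β α h y := by
  have hβ0 : 0 < β := by linarith
  have hsub := (preimage_branchMap_inter_Icc hβ hα A).symm.subset.trans inter_subset_right
  have h₁ := hh.mono_set (subset_union_left.trans hsub)
  have h₂ := hh.mono_set (subset_union_right.trans hsub)
  have hm₂ : MeasurableSet ((fun x => α * (x - 1 / β)) ⁻¹' (A ∩ Icc 0 (α * (1 - 1 / β)))) :=
    (measurableEmbedding_mul_sub _ hα.ne').measurable (hA.inter measurableSet_Icc)
  rw [preimage_branchMap_inter_Icc hβ hα A,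
    setIntegral_union (disjoint_preimage_branches hβ0 hα A) hm₂ h₁ h₂,
    setIntegral_preimage_mul_sub _ hβ0, setIntegral_preimage_mul_sub _ hα]
  rw [← integrableOn_comp_div_add_iff _ hβ0.ne'] at h₁
  rw [← integrableOn_comp_div_add_iff _ hα.ne'] at h₂
  simp only [add_zero] at h₁ ⊢
  have hIco : (A ∩ Ico 0 1 : Set ℝ) =ᵐ[volume] (A ∩ Icc 0 1 : Set ℝ) :=
    (ae_eq_refl A).inter Ico_ae_eq_Icc
  rw [setIntegral_transfer (h₁.congr_set_ae hIco.symm) h₂, setIntegral_congr_set hIco]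

end BranchMap

noncomputable def density (β : ℝ) (k : ℕ) (x : ℝ) : ℝ :=
  1 / (β - 1) * (Icc 0 1).indicator (fun _ => 1) x +
    ∑ i ∈ Finset.range k, β ^ i * (Icc 0 (β ^ (i + 1))⁻¹).indicator (fun _ => 1) x

section Density

variable {β : ℝ}

theorem integrable_density (β : ℝ) (k : ℕ) : Integrable (density β k) := by
  have hind : ∀ t : ℝ, Integrable ((Icc 0 t).indicator fun _ => (1 : ℝ)) := fun t =>
    (integrable_indicator_iff measurableSet_Icc).2 (integrableOn_const measure_Icc_lt_top.ne)
  exact ((hind 1).const_mul _).add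
    (integrable_finsetSum _ fun i _ => (hind _).const_mul _)

theorem indicator_Icc_zero_div (hβ : 0 < β) (t y : ℝ) :
    (Icc 0 t).indicator (fun _ => (1 : ℝ)) (y / β) = (Icc 0 (β * t)).indicator (fun _ => 1) y := by
  have : y / β ∈ Icc 0 t ↔ y ∈ Icc 0 (β * t) := by
    rw [mem_Icc, mem_Icc, le_div_iff₀ hβ, zero_mul, div_le_iff₀' hβ]
  simp only [indicator_apply, this]

theorem density_div (hβ : 0 < β) (k : ℕ) {y : ℝ} (hy : y ∈ Icc 0 β) :
    density β k (y / β) = 1 / (β - 1) +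
      ∑ i ∈ Finset.range k, β ^ i * (Icc 0 (β ^ i)⁻¹).indicator (fun _ => (1 : ℝ)) y := by
  have hy' : y / β ∈ Icc (0 : ℝ) 1 := ⟨div_nonneg hy.1 hβ.le, (div_le_one hβ).2 hy.2⟩
  rw [density, indicator_of_mem hy', mul_one]
  congr 1
  refine Finset.sum_congr rfl fun i _ => ?_
  rw [indicator_Icc_zero_div hβ, pow_succ', mul_inv, ← mul_assoc, mul_inv_cancel₀ hβ.ne', one_mul]

theorem density_of_inv_lt (hβ : 1 ≤ β) (k : ℕ) {z : ℝ} (hz : β⁻¹ < z) (hz1 : z ≤ 1) :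
    density β k z = 1 / (β - 1) := by
  have hz0 : 0 ≤ z := (inv_nonneg.2 (zero_le_one.trans hβ)).trans hz.le
  rw [density, indicator_of_mem (show z ∈ Icc 0 1 from ⟨hz0, hz1⟩), mul_one, add_eq_left]
  refine Finset.sum_eq_zero fun i _ => ?_
  have hle : (β ^ (i + 1))⁻¹ ≤ β⁻¹ :=
    inv_anti₀ (zero_lt_one.trans_le hβ) (le_self_pow₀ hβ (Nat.succ_ne_zero i))
  rw [indicator_of_notMem (fun h => (hle.trans_lt hz).not_ge h.2), mul_zero]

end Density

theorem transfer_density {β α : ℝ} {m : ℕ} (hβ : 1 < β) (hα : α = 1 / (β ^ m * (β - 1))) {y : ℝ}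
    (hy : y ∈ Ioc 0 1) : transfer β α (density β (m + 1)) y = density β (m + 1) y := by
  have hβ0 : 0 < β := zero_lt_one.trans hβ
  have hβ1 : 0 < β - 1 := sub_pos.2 hβ
  have hα0 : 0 < α := by rw [hα]; positivity
  have hy₁ : y ∈ Icc (0 : ℝ) 1 := Ioc_subset_Icc_self hy
  have hr : α * (1 - 1 / β) = (β ^ (m + 1))⁻¹ := by rw [hα]; field_simp; ring
  have hsecond :
      (Icc 0 (α * (1 - 1 / β))).indicator (fun y => density β (m + 1) (y / α + 1 / β)) y =
      1 / (β - 1) * (Icc 0 (β ^ (m + 1))⁻¹).indicator (fun _ => 1) y := by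
    rw [hr]
    by_cases hyr : y ∈ Icc 0 (β ^ (m + 1))⁻¹
    · rw [indicator_of_mem hyr, indicator_of_mem hyr, mul_one]
      refine density_of_inv_lt hβ.le _ ?_ ?_
      · have : 0 < y / α := div_pos hy.1 hα0
        rw [one_div]; linarith
      · have : y / α ≤ 1 - 1 / β := by rw [div_le_iff₀' hα0, hr]; exact hyr.2
        linarith
    · rw [indicator_of_notMem hyr, indicator_of_notMem hyr, mul_zero]
  have hshift : β⁻¹ * ∑ i ∈ Finset.range m,
      β ^ (i + 1) * (Icc 0 (β ^ (i + 1))⁻¹).indicator (fun _ => (1 : ℝ)) y =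
      ∑ i ∈ Finset.range m, β ^ i * (Icc 0 (β ^ (i + 1))⁻¹).indicator (fun _ => 1) y := by
    rw [Finset.mul_sum]
    refine Finset.sum_congr rfl fun i _ => ?_
    rw [pow_succ]; field_simp
  rw [transfer, indicator_of_mem hy₁, density_div hβ0 _ ⟨hy.1.le, hy.2.trans hβ.le⟩, hsecond,
    Finset.sum_range_succ', density, indicator_of_mem hy₁, Finset.sum_range_succ, ← hshift,
    pow_zero, inv_one, indicator_of_mem hy₁, hα]
  field_simp
  ring

/-- Let `β > 1`, `α = 1/(β^(k-1)(β-1))` with `k ≥ 1`, and let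
`S(x) = βx` on `[0,1/β)`, `S(x) = α(x - 1/β)` on `(1/β,1]`. Then the function
`g = (1/(β-1))·1_{[0,1]} + Σ_{i=1}^k β^(i-1)·1_{[0,β^{-i}]}` is a fixed point of
the Perron–Frobenius operator of `S`; equivalently, the measure with density `g`
is `S`-invariant. -/
theorem markov_invariant_density (β α : ℝ) (k : ℕ)
    (hβ : 1 < β) (hk : 1 ≤ k)
    (hα : α = 1 / (β ^ (k - 1) * (β - 1))) :
    let S : ℝ → ℝ := fun x => if x < 1 / β then β * x else α * (x - 1 / β)
    let g : ℝ → ℝ := fun x =>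
      (1 / (β - 1)) * Set.indicator (Set.Icc (0:ℝ) 1) (fun _ => (1:ℝ)) x +
        ∑ i ∈ Finset.range k,
          β ^ i * Set.indicator (Set.Icc (0:ℝ) ((β ^ (i + 1))⁻¹)) (fun _ => (1:ℝ)) x
    ∀ A : Set ℝ, MeasurableSet A → A ⊆ Set.Icc (0:ℝ) 1 →
      ∫ x in S ⁻¹' A ∩ Set.Icc (0:ℝ) 1, g x = ∫ x in A, g x := by
  intro S g A hA hAsub
  obtain ⟨m, rfl⟩ : ∃ m, k = m + 1 := ⟨k - 1, by omega⟩
  rw [Nat.add_sub_cancel] at hα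
  have hα0 : 0 < α := by rw [hα]; have := sub_pos.2 hβ; positivity
  change ∫ x in branchMap β α ⁻¹' A ∩ Icc 0 1, density β (m + 1) x = ∫ x in A, density β (m + 1) x
  rw [setIntegral_preimage_branchMap_inter_Icc hβ.le hα0 (integrable_density β _).integrableOn hA]
  refine setIntegral_congr_ae hA ?_
  filter_upwards [measure_eq_zero_iff_ae_notMem.1 (Real.volume_singleton (a := 0))] with y hy0 hyA
  exact transfer_density hβ hα ⟨(hAsub hyA).1.lt_of_ne (Ne.symm hy0), (hAsub hyA).2⟩
end

section
/- Let n ≥ 2 be an integer and let f = f_{1,n,1-1/n}, i.e. f(x) = x + 1/n for x ∈ [0, 1-1/n) and f(x) = n(x - (1-1/n)) for x ∈ (1-1/n, 1]. Then g_n(x) = (2/(n+1)) Σ_{i=0}^{n-1} 1_{[i/n, 1]}(x) is an invariant probability density for f: P g_n = g_n and ∫_0^1 g_n dm = 1, where P is the Perron–Frobenius operator of f. -/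
/-!
On `[0, 1]` the Perron–Frobenius operator of `f_{a,b,c}` is explicit: pulling back along each
affine branch gives `P h (y) = a⁻¹ 1_{[1-ac,1)}(y) h(c + (y-1)/a) + b⁻¹ 1_{[0,b(1-c)]}(y) h(c + y/b)`.
For `a = 1`, `b = n`, `c = 1 - 1/n` the density `g_n` equals `(2/(n+1)) (⌊n y⌋ + 1)` on `[0, 1)`.
The right branch then contributes the constant `g_n(c + y/n) / n = 2/(n+1)`, and the left branch
contributes `g_n(y - 1/n) = g_n(y) - 2/(n+1)` for `y ≥ 1/n` (and nothing for `y < 1/n`, where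
`g_n = 2/(n+1)`), so `P g_n = g_n` off the null set `{1}`. The normalisation is
`∑_{i<n} (1 - i/n) = (n+1)/2`.
-/

open MeasureTheory

open Set

theorem setIntegral_comp_affine {a : ℝ} (ha : a ≠ 0) (c d : ℝ) {s : Set ℝ}
    (hs : MeasurableSet s) (h : ℝ → ℝ) :
    ∫ y in s, h (c + (y - d) / a) = |a| * ∫ x in (fun x => a * (x - c) + d) ⁻¹' s, h x := by
  have hmem : ∀ y, c + (y - d) / a ∈ (fun x => a * (x - c) + d) ⁻¹' s ↔ y ∈ s := by
    intro y
    simp only [mem_preimage, add_sub_cancel_left, mul_div_cancel₀ _ ha, sub_add_cancel]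
  have hF : ∀ y, s.indicator (fun y => h (c + (y - d) / a)) y =
      ((fun x => a * (x - c) + d) ⁻¹' s).indicator h (c + (y - d) / a) := by
    intro y
    by_cases hy : y ∈ s
    · rw [indicator_of_mem hy, indicator_of_mem ((hmem y).2 hy)]
    · rw [indicator_of_notMem hy, indicator_of_notMem (mt (hmem y).1 hy)]
  rw [← integral_indicator hs, ← integral_indicator (hs.preimage (by fun_prop)),
    integral_congr_ae (.of_forall hF), integral_sub_right_eq_self
      (fun z => ((fun x => a * (x - c) + d) ⁻¹' s).indicator h (c + z / a)) d,
    Measure.integral_comp_div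
      (fun w => ((fun x => a * (x - c) + d) ⁻¹' s).indicator h (c + w)) a,
    integral_add_left_eq_self, smul_eq_mul]

noncomputable def lorenzTransfer (a b c : ℝ) (h : ℝ → ℝ) (y : ℝ) : ℝ :=
  a⁻¹ * (Ico (1 - a * c) 1).indicator (fun y => h (c + (y - 1) / a)) y +
    b⁻¹ * (Icc 0 (b * (1 - c))).indicator (fun y => h (c + y / b)) y

section Lorenz

variable {a b c : ℝ}

theorem lorenz_preimage_inter_Icc (ha : 0 < a) (hb : 0 < b) (hc₀ : 0 ≤ c) (hc₁ : c ≤ 1)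
    (A : Set ℝ) :
    lorenz a b c ⁻¹' A ∩ Icc 0 1 =
      (fun x => a * (x - c) + 1) ⁻¹' (A ∩ Ico (1 - a * c) 1) ∪
        (fun x => b * (x - c)) ⁻¹' (A ∩ Icc 0 (b * (1 - c))) := by
  ext x
  simp only [lorenz, mem_inter_iff, mem_preimage, mem_union, mem_Ico, mem_Icc]
  rcases lt_or_ge x c with hx | hx
  · rw [if_pos hx]
    have : a * x + 1 - a * c = a * (x - c) + 1 := by ring
    constructor
    · rintro ⟨hA, h0, -⟩; left; exact ⟨this ▸ hA, by nlinarith, by nlinarith⟩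
    · rintro (⟨hA, h1, h2⟩ | ⟨hA, h1, h2⟩)
      · exact ⟨this ▸ hA, by nlinarith, by linarith⟩
      · nlinarith
  · rw [if_neg hx.not_gt]
    constructor
    · rintro ⟨hA, -, h1⟩; right; exact ⟨hA, by nlinarith, by nlinarith⟩
    · rintro (⟨hA, h1, h2⟩ | ⟨hA, h1, h2⟩)
      · nlinarith
      · exact ⟨hA, by linarith, by nlinarith⟩

theorem setIntegral_lorenz_preimage (ha : 0 < a) (hb : 0 < b) (hc₀ : 0 ≤ c) (hc₁ : c ≤ 1)
    {h : ℝ → ℝ} (hh : Integrable h) {A : Set ℝ} (hA : MeasurableSet A) :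
    ∫ x in lorenz a b c ⁻¹' A ∩ Icc 0 1, h x = ∫ y in A, lorenzTransfer a b c h y := by
  have hdisj : Disjoint ((fun x => a * (x - c) + 1) ⁻¹' (A ∩ Ico (1 - a * c) 1))
      ((fun x => b * (x - c)) ⁻¹' (A ∩ Icc 0 (b * (1 - c)))) := by
    refine disjoint_left.2 fun x ⟨_, _, h1⟩ ⟨_, h2, _⟩ => ?_
    nlinarith
  have hleft := setIntegral_comp_affine ha.ne' c 1
    (hA.inter (measurableSet_Ico (a := 1 - a * c) (b := 1))) h
  have hright : ∫ y in A ∩ Icc 0 (b * (1 - c)), h (c + y / b) =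
      |b| * ∫ x in (fun x => b * (x - c)) ⁻¹' (A ∩ Icc 0 (b * (1 - c))), h x := by
    simpa using setIntegral_comp_affine hb.ne' c 0
      (hA.inter (measurableSet_Icc (a := 0) (b := b * (1 - c)))) h
  simp only [lorenzTransfer]
  rw [lorenz_preimage_inter_Icc ha hb hc₀ hc₁,
    setIntegral_union hdisj ((hA.inter measurableSet_Icc).preimage (by fun_prop))
      hh.integrableOn hh.integrableOn,
    integral_add
      ((((hh.comp_add_left c).comp_div ha.ne').comp_sub_right 1).indicator
        measurableSet_Ico |>.const_mul _).integrableOn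
      (((hh.comp_add_left c).comp_div hb.ne').indicator
        measurableSet_Icc |>.const_mul _).integrableOn,
    integral_const_mul, integral_const_mul, setIntegral_indicator measurableSet_Ico,
    setIntegral_indicator measurableSet_Icc, hleft, hright,
    abs_of_pos ha, abs_of_pos hb, inv_mul_cancel_left₀ ha.ne', inv_mul_cancel_left₀ hb.ne']

end Lorenz

noncomputable def invariantDensity (n : ℕ) : ℝ → ℝ := fun x =>
  2 / ((n : ℝ) + 1) *
    ∑ i ∈ Finset.range n, (Icc ((i : ℝ) / n) 1).indicator (fun _ => (1 : ℝ)) x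

section InvariantDensity

variable {n : ℕ}

theorem sum_indicator_Icc_div_eq_floor_add_one (hn : 0 < n) {y : ℝ} (hy : y ∈ Ico 0 1) :
    ∑ i ∈ Finset.range n, (Icc ((i : ℝ) / n) 1).indicator (fun _ => (1 : ℝ)) y =
      ⌊n * y⌋₊ + 1 := by
  have hn' : (0 : ℝ) < n := Nat.cast_pos.2 hn
  have hfloor : ⌊n * y⌋₊ < n := (Nat.floor_lt (by nlinarith [hy.1])).2 (by nlinarith [hy.2])
  have hterm : ∀ i : ℕ, (Icc ((i : ℝ) / n) 1).indicator (fun _ => (1 : ℝ)) y =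
      if i ≤ ⌊n * y⌋₊ then 1 else 0 := by
    intro i
    simp only [indicator_apply, mem_Icc, hy.2.le, and_true, div_le_iff₀ hn',
      Nat.le_floor_iff (by nlinarith [hy.1] : (0:ℝ) ≤ n * y), mul_comm y]
  have hrange : (Finset.range n).filter (· ≤ ⌊n * y⌋₊) = Finset.range (⌊n * y⌋₊ + 1) := by
    ext i; simp only [Finset.mem_filter, Finset.mem_range]; omega
  rw [Finset.sum_congr rfl fun i _ => hterm i, Finset.sum_boole, hrange, Finset.card_range]
  push_cast; ring

theorem invariantDensity_eq_floor (hn : 0 < n) {y : ℝ} (hy : y ∈ Ico 0 1) :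
    invariantDensity n y = 2 / ((n : ℝ) + 1) * (⌊n * y⌋₊ + 1) := by
  rw [invariantDensity, sum_indicator_Icc_div_eq_floor_add_one hn hy]

theorem integrable_indicator_Icc_one (a b : ℝ) :
    Integrable ((Icc a b).indicator fun _ => (1 : ℝ)) :=
  (integrable_indicator_iff measurableSet_Icc).2 (integrableOn_const measure_Icc_lt_top.ne)

theorem invariantDensity_integrable (n : ℕ) : Integrable (invariantDensity n) :=
  (integrable_finsetSum _ fun _ _ => integrable_indicator_Icc_one _ _).const_mul _

theorem sum_range_one_sub_div (hn : 0 < n) :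
    ∑ i ∈ Finset.range n, (1 - (i : ℝ) / n) = ((n : ℝ) + 1) / 2 := by
  have hgauss : ∀ m : ℕ, ∑ i ∈ Finset.range m, (i : ℝ) = m * (m - 1) / 2 := by
    intro m
    induction m with
    | zero => simp
    | succ m ih => rw [Finset.sum_range_succ, ih]; push_cast; ring
  have hn' : (n : ℝ) ≠ 0 := by positivity
  rw [Finset.sum_sub_distrib, ← Finset.sum_div, hgauss]
  simp only [Finset.sum_const, Finset.card_range, nsmul_eq_mul, mul_one]
  field_simp
  ring

theorem integral_invariantDensity (hn : 0 < n) :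
    ∫ x in Icc (0 : ℝ) 1, invariantDensity n x = 1 := by
  have hn' : (0 : ℝ) < n := Nat.cast_pos.2 hn
  have hstep : ∀ i ∈ Finset.range n,
      ∫ x in Icc (0 : ℝ) 1, (Icc ((i : ℝ) / n) 1).indicator (fun _ => (1 : ℝ)) x =
        1 - (i : ℝ) / n := by
    intro i hi
    have hi1 : (i : ℝ) / n ≤ 1 :=
      (div_le_one hn').2 (by exact_mod_cast (Finset.mem_range.1 hi).le)
    rw [setIntegral_indicator measurableSet_Icc, Icc_inter_Icc, setIntegral_const,
      max_eq_right (by positivity), min_self, smul_eq_mul, mul_one,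
      Real.volume_real_Icc_of_le hi1]
  simp only [invariantDensity]
  rw [integral_const_mul,
    integral_finsetSum _ fun _ _ => (integrable_indicator_Icc_one _ _).integrableOn,
    Finset.sum_congr rfl hstep, sum_range_one_sub_div hn]
  field_simp

theorem floor_mul_one_sub_one_div_add_div (hn : 0 < n) {y : ℝ} (hy : y ∈ Ico 0 1) :
    ⌊n * (1 - 1 / n + y / n)⌋₊ = n - 1 := by
  have hn' : (n : ℝ) ≠ 0 := by positivity
  have hcast : ((n - 1 : ℕ) : ℝ) = n - 1 := by rw [Nat.cast_sub hn, Nat.cast_one]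
  rw [show (n : ℝ) * (1 - 1 / n + y / n) = y + ((n - 1 : ℕ) : ℝ) by
      rw [hcast]; field_simp; ring,
    Nat.floor_add_natCast hy.1, Nat.floor_eq_zero.2 hy.2, zero_add]

theorem lorenzTransfer_invariantDensity (hn : 0 < n) {y : ℝ} (hy : y ∈ Ico 0 1) :
    lorenzTransfer 1 n (1 - 1 / n) (invariantDensity n) y = invariantDensity n y := by
  have hn' : (0 : ℝ) < n := Nat.cast_pos.2 hn
  have hz : 1 - 1 / (n : ℝ) + y / n ∈ Ico 0 1 := by
    have : 1 / (n : ℝ) ≤ 1 := (div_le_one hn').2 (by exact_mod_cast hn)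
    have : y / n < 1 / n := div_lt_div_of_pos_right hy.2 hn'
    exact ⟨by linarith [div_nonneg hy.1 hn'.le], by linarith⟩
  have hright : (n : ℝ)⁻¹ * invariantDensity n (1 - 1 / n + y / n) = 2 / ((n : ℝ) + 1) := by
    rw [invariantDensity_eq_floor hn hz, floor_mul_one_sub_one_div_add_div hn hy,
      Nat.cast_sub hn]
    field_simp
    ring
  have hIcc : y ∈ Icc 0 ((n : ℝ) * (1 - (1 - 1 / n))) := by
    rw [sub_sub_cancel, mul_one_div_cancel hn'.ne']; exact ⟨hy.1, hy.2.le⟩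
  simp only [lorenzTransfer, indicator_of_mem hIcc, one_mul, inv_one, div_one, hright]
  rw [sub_sub_cancel]
  rcases lt_or_ge y (1 / n) with hy1 | hy1
  · rw [indicator_of_notMem (fun h => h.1.not_gt hy1), zero_add,
      invariantDensity_eq_floor hn hy,
      Nat.floor_eq_zero.2 (by rwa [lt_div_iff₀ hn', mul_comm] at hy1)]
    simp
  · have hshift : y - 1 / n ∈ Ico 0 1 :=
      ⟨sub_nonneg.2 hy1, by linarith [hy.2, div_pos one_pos hn']⟩
    rw [indicator_of_mem (show y ∈ Ico (1 / (n : ℝ)) 1 from ⟨hy1, hy.2⟩),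
      show 1 - 1 / (n : ℝ) + (y - 1) = y - 1 / n by ring,
      invariantDensity_eq_floor hn hshift, invariantDensity_eq_floor hn hy,
      show (n : ℝ) * (y - 1 / n) = n * y - 1 by field_simp, Nat.floor_sub_one,
      Nat.cast_sub (Nat.one_le_floor_iff _ |>.2 (by rwa [div_le_iff₀ hn', mul_comm] at hy1))]
    ring

end InvariantDensity

/-- For an integer `n ≥ 2` and `f = f_{1,n,1-1/n}`, the function
`g_n = (2/(n+1)) Σ_{i=0}^{n-1} 1_{[i/n,1]}` is an invariant probability density
for `f`: the measure with density `g_n` is `f`-invariant and `∫ g_n = 1`. -/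
theorem markov_invariant_density_two (n : ℕ) (hn : 2 ≤ n) :
    let f : ℝ → ℝ := lorenz 1 (n : ℝ) (1 - 1 / (n : ℝ))
    let g : ℝ → ℝ := fun x =>
      (2 / ((n : ℝ) + 1)) * ∑ i ∈ Finset.range n,
        Set.indicator (Set.Icc ((i : ℝ) / (n : ℝ)) 1) (fun _ => (1:ℝ)) x
    (∀ A : Set ℝ, MeasurableSet A → A ⊆ Set.Icc (0:ℝ) 1 →
        ∫ x in f ⁻¹' A ∩ Set.Icc (0:ℝ) 1, g x = ∫ x in A, g x) ∧
      ∫ x in Set.Icc (0:ℝ) 1, g x = 1 := by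
  intro f g
  have hn₀ : 0 < n := by omega
  have hn' : (0 : ℝ) < n := Nat.cast_pos.2 hn₀
  have hc : 1 / (n : ℝ) ≤ 1 := (div_le_one hn').2 (by exact_mod_cast hn₀)
  refine ⟨fun A hA hA01 => ?_, integral_invariantDensity hn₀⟩
  refine (setIntegral_lorenz_preimage one_pos hn' (sub_nonneg.2 hc)
    (sub_le_self _ (by positivity)) (invariantDensity_integrable n) hA).trans
    (setIntegral_congr_ae hA ?_)
  filter_upwards [Measure.ae_ne volume 1] with y hy1 hyA
  exact lorenzTransfer_invariantDensity hn₀ ⟨(hA01 hyA).1, (hA01 hyA).2.lt_of_ne hy1⟩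
end
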